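/- For every n ≥ 1, the poset (W(S_n), ≤_R) of Wachs permutations of S_n under the right weak order is isomorphic to the direct product (S_{⌈n/2⌉}, ≤_R) × P([⌊n/2⌋]), where P([⌊n/2⌋]) is the Boolean lattice ordered by inclusion. In particular, (W(S_n), ≤_R) is a complemented lattice. -/

import Mathlib

open Finset
open scoped Classical

theorem Equiv.Perm.inv_apply_self (f : Equiv.Perm ℕ) (x : ℕ) : f⁻¹ (f x) = x :=
  Equiv.Perm.inv_eq_iff_eq.mpr rfl

theorem Equiv.Perm.apply_inv_self (f : Equiv.Perm ℕ) (x : ℕ) : f (f⁻¹ x) = x :=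
  (Equiv.eq_symm_apply f).mp rfl

namespace WachsPaper

/-! ### Type A (symmetric group) basics -/

/-- `w` is a permutation of `{1,…,n}` (it fixes everything outside `[1,n]`). -/
def PermOn (n : ℕ) (w : Equiv.Perm ℕ) : Prop :=
  ∀ i : ℕ, i ∉ Finset.Icc 1 n → w i = i

/-- the involution `i ↦ i*` on `[n]`. -/
def star (n i : ℕ) : ℕ :=
  if i % 2 = 0 then i - 1 else if i + 1 ≤ n then i + 1 else n

/-- Wachs permutations of `S_n`. -/
def IsWachs (n : ℕ) (w : Equiv.Perm ℕ) : Prop :=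
  PermOn n w ∧ ∀ i ∈ Finset.Icc 1 (n - 1),
    |(w⁻¹ i : ℤ) - (w⁻¹ (star n i) : ℤ)| ≤ 1

/-- the increasing rearrangement of `w(1),…,w(k)`. -/
def sortedPrefix (w : ℕ → ℕ) (k : ℕ) : List ℕ :=
  Finset.sort ((Finset.Icc 1 k).image w) (· ≤ ·)

/-- Bruhat order on `S_n` via the tableau criterion. -/
def bruhatLE (n : ℕ) (u v : Equiv.Perm ℕ) : Prop :=
  ∀ k ∈ Finset.Icc 1 n, ∀ i : ℕ,
    (sortedPrefix (⇑u) k).getD i 0 ≤ (sortedPrefix (⇑v) k).getD i 0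

def bruhatLT (n : ℕ) (u v : Equiv.Perm ℕ) : Prop :=
  bruhatLE n u v ∧ u ≠ v

/-- `v` covers `u` in the Bruhat order restricted to the set of permutations
satisfying `A`. -/
def covInduced (n : ℕ) (A : Equiv.Perm ℕ → Prop) (u v : Equiv.Perm ℕ) : Prop :=
  A u ∧ A v ∧ bruhatLT n u v ∧
    ∀ z, A z → bruhatLT n u z → ¬ bruhatLT n z v

/-- number of inversions of `w` on `[1,n]` (Coxeter length on `S_n`). -/
def len (n : ℕ) (w : ℕ → ℕ) : ℕ :=
  (((Finset.Icc 1 n) ×ˢ (Finset.Icc 1 n)).filter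
    (fun p => p.1 < p.2 ∧ w p.2 < w p.1)).card

/-- `v = φ_{2m}⁻¹(τ,T)`, i.e. `v` corresponds to the pair `(τ,T)` under `φ_{2m}`. -/
def phiRel (m : ℕ) (τ : Equiv.Perm ℕ) (T : Finset ℕ) (v : Equiv.Perm ℕ) : Prop :=
  ∀ i ∈ Finset.Icc 1 m,
    if i ∈ T then v (2*i - 1) = 2 * τ i ∧ v (2*i) = 2 * τ i - 1
    else v (2*i - 1) = 2 * τ i - 1 ∧ v (2*i) = 2 * τ i

/-- position of the value `n` in `v`. -/
def pos (n : ℕ) (v : Equiv.Perm ℕ) : ℕ := v⁻¹ n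

/-- `w = χ_n(v)`: `w` is obtained from `v` by deleting the value `n`. -/
def chiRel (n : ℕ) (v w : Equiv.Perm ℕ) : Prop :=
  PermOn (n - 1) w ∧ ∀ k ∈ Finset.Icc 1 (n - 1),
    w k = if k < pos n v then v k else v (k + 1)

/-- `v = φ_{2m+1}⁻¹(i,τ,T)`. -/
def phiOddRel (m i : ℕ) (τ : Equiv.Perm ℕ) (T : Finset ℕ) (v : Equiv.Perm ℕ) : Prop :=
  pos (2*m+1) v = 2*i - 1 ∧ ∃ w : Equiv.Perm ℕ, chiRel (2*m+1) v w ∧ phiRel m τ T w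

def chiVal (n : ℕ) (v : Equiv.Perm ℕ) (k : ℕ) : ℕ :=
  if k < pos n v then v k else v (k + 1)

/-- the underlying permutation `f_n(v) ∈ S_{⌊n/2⌋}` of a Wachs permutation `v`,
as a function. -/
def fMap (n : ℕ) (v : Equiv.Perm ℕ) : ℕ → ℕ :=
  if n % 2 = 0 then fun i => (v (2*i - 1) + 1) / 2
  else fun i => (chiVal n v (2*i - 1) + 1) / 2

/-- `ℓ_W(v) = ℓ(v) - ℓ(f_n(v))`. -/
def lenW (n : ℕ) (v : Equiv.Perm ℕ) : ℕ := len n ⇑v - len (n / 2) (fMap n v)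

def revFun (n i : ℕ) : ℕ := if 1 ≤ i ∧ i ≤ n then n + 1 - i else i

lemma revFun_invol (n : ℕ) : Function.Involutive (revFun n) := by
  intro i; unfold revFun; split_ifs <;> omega

/-- the maximal element `n … 3 2 1` of `S_n`. -/
def rev (n : ℕ) : Equiv.Perm ℕ := (revFun_invol n).toPerm

/-- right weak order on `S_n`. -/
def weakLE (n : ℕ) (u v : Equiv.Perm ℕ) : Prop :=
  len n ⇑v = len n ⇑u + len n ⇑(u⁻¹ * v)

/-! ### Type B (hyperoctahedral group) basics -/

/-- membership in the window `[±n] = {-n,…,-1,1,…,n}`. -/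
def inWindow (n : ℕ) (i : ℤ) : Prop :=
  (1 ≤ i ∧ i ≤ (n : ℤ)) ∨ (-(n : ℤ) ≤ i ∧ i ≤ -1)

instance (n : ℕ) (i : ℤ) : Decidable (inWindow n i) := by
  unfold inWindow; infer_instance

/-- `w` is an element of the hyperoctahedral group `B_n`, viewed as a
permutation of `ℤ` with `w(-i) = -w(i)` fixing everything outside `[±n]`. -/
def PermOnB (n : ℕ) (w : Equiv.Perm ℤ) : Prop :=
  (∀ i : ℤ, w (-i) = - w i) ∧ ∀ i : ℤ, ¬ inWindow n i → w i = i

/-- signed Wachs permutations of `B_n`. -/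
def IsSignedWachs (n : ℕ) (w : Equiv.Perm ℤ) : Prop :=
  PermOnB n w ∧ ∀ i ∈ Finset.Icc 1 (n - 1),
    |w⁻¹ (i : ℤ) - w⁻¹ ((star n i : ℕ) : ℤ)| ≤ 1

noncomputable def sortedPrefixB (n : ℕ) (w : ℤ → ℤ) (k : ℤ) : List ℤ :=
  Finset.sort (((Finset.Icc (-(n : ℤ)) k).erase 0).image w) (· ≤ ·)

/-- Bruhat order on `B_n`, via the tableau criterion for the symmetric group
on `[±n]` under the natural embedding. -/
def bruhatLEB (n : ℕ) (u v : Equiv.Perm ℤ) : Prop :=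
  ∀ k : ℤ, ∀ i : ℕ,
    (sortedPrefixB n (⇑u) k).getD i 0 ≤ (sortedPrefixB n (⇑v) k).getD i 0

def bruhatLTB (n : ℕ) (u v : Equiv.Perm ℤ) : Prop := bruhatLEB n u v ∧ u ≠ v

def covInducedB (n : ℕ) (A : Equiv.Perm ℤ → Prop) (u v : Equiv.Perm ℤ) : Prop :=
  A u ∧ A v ∧ bruhatLTB n u v ∧ ∀ z, A z → bruhatLTB n u z → ¬ bruhatLTB n z v

noncomputable def invB (n : ℕ) (w : ℤ → ℤ) : ℕ :=
  (((Finset.Icc (1:ℤ) (n:ℤ)) ×ˢ (Finset.Icc (1:ℤ) (n:ℤ))).filter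
    (fun p => p.1 < p.2 ∧ w p.2 < w p.1)).card

noncomputable def negB (n : ℕ) (w : ℤ → ℤ) : ℕ :=
  ((Finset.Icc (1:ℤ) (n:ℤ)).filter (fun i => w i < 0)).card

noncomputable def nspB (n : ℕ) (w : ℤ → ℤ) : ℕ :=
  (((Finset.Icc (1:ℤ) (n:ℤ)) ×ˢ (Finset.Icc (1:ℤ) (n:ℤ))).filter
    (fun p => p.1 < p.2 ∧ w p.1 + w p.2 < 0)).card

/-- Coxeter length on `B_n`: `ℓ_B = inv + neg + nsp`. -/
noncomputable def lenB (n : ℕ) (w : ℤ → ℤ) : ℕ := invB n w + negB n w + nspB n w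

/-- indicator `χ(P) ∈ {0,1}`. -/
def chiZ (P : Prop) [Decidable P] : ℤ := if P then 1 else 0

/-- `v = φ⁻¹(σ,T)` for `B_{2m}`. -/
def phiBRel (m : ℕ) (σ : Equiv.Perm ℤ) (T : Finset ℕ) (v : Equiv.Perm ℤ) : Prop :=
  ∀ i ∈ Finset.Icc 1 m,
    if i ∈ T then
      v (2*(i:ℤ) - 1) = 2 * σ (i:ℤ) + chiZ (σ (i:ℤ) < 0) ∧
      v (2*(i:ℤ)) = 2 * σ (i:ℤ) - chiZ (0 < σ (i:ℤ))
    else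
      v (2*(i:ℤ) - 1) = 2 * σ (i:ℤ) - chiZ (0 < σ (i:ℤ)) ∧
      v (2*(i:ℤ)) = 2 * σ (i:ℤ) + chiZ (σ (i:ℤ) < 0)

/-- the signed reflection `(a,b)_B`. -/
def sgnRefl (a b : ℤ) : Equiv.Perm ℤ :=
  if a = -b then Equiv.swap a (-a) else Equiv.swap a b * Equiv.swap (-a) (-b)

/-- the coatom `c(v)` of Theorem 4.9. -/
def cB (m : ℕ) (v : Equiv.Perm ℤ) : Equiv.Perm ℤ :=
  if v⁻¹ (2*(m:ℤ)+1) = -1 then v * Equiv.swap (-1) 1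
  else if v (v⁻¹ (2*(m:ℤ)+1) + 2) < v (v⁻¹ (2*(m:ℤ)+1) + 1) then
    v * sgnRefl (v⁻¹ (2*(m:ℤ)+1) + 1) (v⁻¹ (2*(m:ℤ)+1) + 2)
  else v * sgnRefl (v⁻¹ (2*(m:ℤ)+1)) (v⁻¹ (2*(m:ℤ)+1) + 2)

/-- value of `v̄` (the element of `W(B_{2m})` obtained from `v ∈ W(B_{2m+1})` by
deleting the entries `±(2m+1)`) at a positive position `k`. -/
def barVal (m : ℕ) (v : Equiv.Perm ℤ) (k : ℤ) : ℤ :=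
  if k < |v⁻¹ (2*(m:ℤ)+1)| then v k else v (k + 1)

def toHalf (x : ℤ) : ℤ := if 0 < x then (x + 1) / 2 else -((-x + 1) / 2)

/-- the underlying signed permutation `σ ∈ B_{⌊n/2⌋}` of `v ∈ W(B_n)`, as a function. -/
def fMapB (n : ℕ) (v : Equiv.Perm ℤ) : ℤ → ℤ :=
  if n % 2 = 0 then fun i => toHalf (v (2*i - 1))
  else fun i => toHalf (barVal (n / 2) v (2*i - 1))

/-- `ℓ_W(v) = ℓ_B(v) - ℓ_B(σ)` for a signed Wachs permutation `v`. -/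
noncomputable def lenWB (n : ℕ) (v : Equiv.Perm ℤ) : ℕ := lenB n ⇑v - lenB (n / 2) (fMapB n v)

/-- `v = (j,σ,S)` for `v ∈ W(B_{2m+1})`. -/
def phiBOddRel (m : ℕ) (j : ℤ) (σ : Equiv.Perm ℤ) (S : Finset ℕ) (v : Equiv.Perm ℤ) : Prop :=
  (v⁻¹ (2*(m:ℤ)+1) = if 0 < j then 2*j - 1 else 2*j + 1) ∧
  ∃ w : Equiv.Perm ℤ, PermOnB (2*m) w ∧
    (∀ k ∈ Finset.Icc (1:ℤ) (2*(m:ℤ)), w k = barVal m v k) ∧ phiBRel m σ S w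

def w0BFun (n : ℕ) (i : ℤ) : ℤ := if inWindow n i then -i else i

lemma w0BFun_invol (n : ℕ) : Function.Involutive (w0BFun n) := by
  intro i; unfold w0BFun inWindow; split_ifs <;> omega

/-- the maximal element `[-1,-2,…,-n]` of `B_n`. -/
def w0B (n : ℕ) : Equiv.Perm ℤ := (w0BFun_invol n).toPerm

/-- right weak order on `B_n`. -/
def weakLEB (n : ℕ) (u v : Equiv.Perm ℤ) : Prop :=
  lenB n ⇑v = lenB n ⇑u + lenB n ⇑(u⁻¹ * v)
/-! ### Auxiliary infrastructure for the proof -/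

section Aux

open Equiv

/-- inversion set (by values) of `w` on `[1,n]`. -/
def I (n : ℕ) (w : Equiv.Perm ℕ) : Finset (ℕ × ℕ) :=
  ((Finset.Icc 1 n) ×ˢ (Finset.Icc 1 n)).filter
    (fun p => p.1 < p.2 ∧ w⁻¹ p.2 < w⁻¹ p.1)

def allPairs (n : ℕ) : Finset (ℕ × ℕ) :=
  ((Finset.Icc 1 n) ×ˢ (Finset.Icc 1 n)).filter (fun p => p.1 < p.2)

lemma mem_I {n : ℕ} {w : Equiv.Perm ℕ} {a b : ℕ} :
    (a, b) ∈ I n w ↔ (a ∈ Finset.Icc 1 n ∧ b ∈ Finset.Icc 1 n) ∧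
      a < b ∧ w⁻¹ b < w⁻¹ a := by
  simp [I, Finset.mem_filter, Finset.mem_product]

lemma mem_allPairs {n : ℕ} {a b : ℕ} :
    (a, b) ∈ allPairs n ↔ (a ∈ Finset.Icc 1 n ∧ b ∈ Finset.Icc 1 n) ∧ a < b := by
  simp [allPairs, Finset.mem_filter, Finset.mem_product]

lemma I_subset_allPairs {n : ℕ} {w : Equiv.Perm ℕ} : I n w ⊆ allPairs n := by
  intro p hp
  rcases p with ⟨a, b⟩
  rw [mem_I] at hp; rw [mem_allPairs]
  exact ⟨hp.1, hp.2.1⟩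

lemma PermOn.maps {n : ℕ} {w : Equiv.Perm ℕ} (h : PermOn n w) {a : ℕ}
    (ha : a ∈ Finset.Icc 1 n) : w a ∈ Finset.Icc 1 n := by
  by_contra hc
  have h1 := h _ hc
  have h2 : w a = a := w.injective h1
  rw [h2] at hc; exact hc ha

lemma PermOn.inv {n : ℕ} {w : Equiv.Perm ℕ} (h : PermOn n w) : PermOn n w⁻¹ := by
  intro i hi
  have := h i hi
  calc w⁻¹ i = w⁻¹ (w i) := by rw [this]
  _ = i := Equiv.Perm.inv_apply_self w i

lemma PermOn.one (n : ℕ) : PermOn n 1 := fun i _ => rfl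

lemma card_I_eq_len {n : ℕ} {w : Equiv.Perm ℕ} (h : PermOn n w) :
    (I n w).card = len n ⇑w := by
  unfold I len
  apply Finset.card_bij' (fun p _ => ((w⁻¹ p.2 : ℕ), (w⁻¹ p.1 : ℕ)))
    (fun p _ => ((w p.2 : ℕ), (w p.1 : ℕ)))
  · intro p hp
    simp only [Finset.mem_filter, Finset.mem_product] at hp ⊢
    exact ⟨⟨h.inv.maps hp.1.2, h.inv.maps hp.1.1⟩, hp.2.2,
      by simp only [Equiv.Perm.apply_inv_self]; exact hp.2.1⟩
  · intro p hp
    simp only [Finset.mem_filter, Finset.mem_product] at hp ⊢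
    refine ⟨⟨h.maps hp.1.2, h.maps hp.1.1⟩, hp.2.2, ?_⟩
    simp only [Equiv.Perm.inv_apply_self]
    exact hp.2.1
  · intro p hp; simp
  · intro p hp; simp

end Aux
section Aux2

lemma len_diff {n : ℕ} {u v : Equiv.Perm ℕ} (hu : PermOn n u) (hv : PermOn n v) :
    len n ⇑(u⁻¹ * v) = ((I n u \ I n v) ∪ (I n v \ I n u)).card := by
  unfold len
  apply Finset.card_bij' (fun p _ => (min (v p.1) (v p.2), max (v p.1) (v p.2)))
    (fun p _ => (min (v⁻¹ p.1) (v⁻¹ p.2), max (v⁻¹ p.1) (v⁻¹ p.2)))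
  · intro p hp
    simp only [Finset.mem_filter, Finset.mem_product] at hp
    simp only [Equiv.Perm.mul_apply] at hp
    obtain ⟨⟨h1, h2⟩, hlt, hinv⟩ := hp
    rcases p with ⟨x, y⟩
    simp only at hlt hinv ⊢
    have hne : v x ≠ v y := fun h => absurd (v.injective h) (Nat.ne_of_lt hlt)
    rcases lt_or_gt_of_ne hne with hvy | hvy
    · -- v x < v y : element of I u \ I v
      have hmin : min (v x) (v y) = v x := min_eq_left hvy.le
      have hmax : max (v x) (v y) = v y := max_eq_right hvy.le
      rw [hmin, hmax]
      apply Finset.mem_union_left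
      rw [Finset.mem_sdiff, mem_I, mem_I]
      refine ⟨⟨⟨hv.maps h1, hv.maps h2⟩, hvy, by simpa using hinv⟩, ?_⟩
      rintro ⟨-, -, hc⟩
      simp only [Equiv.Perm.inv_apply_self] at hc
      omega
    · have hmin : min (v x) (v y) = v y := min_eq_right hvy.le
      have hmax : max (v x) (v y) = v x := max_eq_left hvy.le
      rw [hmin, hmax]
      apply Finset.mem_union_right
      rw [Finset.mem_sdiff, mem_I, mem_I]
      refine ⟨⟨⟨hv.maps h2, hv.maps h1⟩, hvy, by simpa using hlt⟩, ?_⟩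
      rintro ⟨-, -, hc⟩
      simpa using not_lt_of_gt hinv (by simpa using hc)
  · intro p hp
    rcases p with ⟨a, b⟩
    simp only [Finset.mem_union, Finset.mem_sdiff, mem_I] at hp
    simp only [Finset.mem_filter, Finset.mem_product]
    simp only [Equiv.Perm.mul_apply]
    rcases hp with ⟨⟨⟨ha, hb⟩, hab, hvu⟩, hnv⟩ | ⟨⟨⟨ha, hb⟩, hab, hvv⟩, hnu⟩
    · -- (a,b) ∈ I u \ I v : v⁻¹ a < v⁻¹ b
      have hne : v⁻¹ a ≠ v⁻¹ b := fun h => absurd (v⁻¹.injective h) (Nat.ne_of_lt hab)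
      have hv' : v⁻¹ a < v⁻¹ b := by
        rcases lt_or_gt_of_ne hne with h | h
        · exact h
        · exact absurd ⟨⟨ha, hb⟩, hab, h⟩ hnv
      rw [min_eq_left hv'.le, max_eq_right hv'.le]
      refine ⟨⟨hv.inv.maps ha, hv.inv.maps hb⟩, hv', ?_⟩
      simpa using hvu
    · have hv' : v⁻¹ b < v⁻¹ a := hvv
      rw [min_eq_right hv'.le, max_eq_left hv'.le]
      refine ⟨⟨hv.inv.maps hb, hv.inv.maps ha⟩, hv', ?_⟩
      simp only [Equiv.Perm.apply_inv_self]
      rcases lt_or_gt_of_ne (fun h : u⁻¹ a = u⁻¹ b => absurd (u⁻¹.injective h) (Nat.ne_of_lt hab)) with h | h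
      · exact h
      · exact absurd ⟨⟨ha, hb⟩, hab, h⟩ hnu
  · intro p hp
    simp only [Finset.mem_filter, Finset.mem_product] at hp
    rcases p with ⟨x, y⟩
    have hxy : x < y := hp.2.1
    rcases le_or_gt (v x) (v y) with h | h
    · simp [min_eq_left h, max_eq_right h, min_eq_left hxy.le, max_eq_right hxy.le]
    · simp [min_eq_right h.le, max_eq_left h.le, min_eq_right hxy.le, max_eq_left hxy.le]
  · intro p hp
    rcases p with ⟨a, b⟩
    simp only [Finset.mem_union, Finset.mem_sdiff, mem_I] at hp
    have hab : a < b := by rcases hp with ⟨⟨-, h, -⟩, -⟩ | ⟨⟨-, h, -⟩, -⟩ <;> exact h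
    rcases le_or_gt (v⁻¹ a) (v⁻¹ b) with h | h
    · simp only [min_eq_left h, max_eq_right h]
      simp [min_eq_left hab.le, max_eq_right hab.le]
    · simp only [min_eq_right h.le, max_eq_left h.le]
      simp [min_eq_right hab.le, max_eq_left hab.le]

lemma weakLE_iff {n : ℕ} {u v : Equiv.Perm ℕ} (hu : PermOn n u) (hv : PermOn n v) :
    weakLE n u v ↔ I n u ⊆ I n v := by
  unfold weakLE
  rw [← card_I_eq_len hu, ← card_I_eq_len hv, len_diff hu hv]
  have hdisj : Disjoint (I n u \ I n v) (I n v \ I n u) :=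
    disjoint_sdiff_sdiff
  rw [Finset.card_union_of_disjoint hdisj]
  have h1 : (I n u ∩ I n v).card + (I n u \ I n v).card = (I n u).card :=
    Finset.card_inter_add_card_sdiff _ _
  have h2 : (I n v ∩ I n u).card + (I n v \ I n u).card = (I n v).card :=
    Finset.card_inter_add_card_sdiff _ _
  have h3 : (I n u ∩ I n v).card = (I n v ∩ I n u).card := by rw [Finset.inter_comm]
  constructor
  · intro h
    have : (I n u \ I n v).card = 0 := by omega
    rw [Finset.card_eq_zero, Finset.sdiff_eq_empty_iff_subset] at this
    exact this
  · intro h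
    have : (I n u \ I n v).card = 0 := by
      rw [Finset.card_eq_zero, Finset.sdiff_eq_empty_iff_subset]; exact h
    omega

end Aux2
section Aux3

lemma lower_of_smo {k : ℕ} {f : ℕ → ℕ}
    (hf : ∀ x ∈ Finset.Icc 1 k, ∀ y ∈ Finset.Icc 1 k, x < y → f x < f y)
    (hm : ∀ x ∈ Finset.Icc 1 k, f x ∈ Finset.Icc 1 k) :
    ∀ a ∈ Finset.Icc 1 k, a ≤ f a := by
  intro a
  induction a using Nat.strong_induction_on with
  | _ a ih =>
    intro ha
    rcases Nat.eq_or_lt_of_le (Finset.mem_Icc.mp ha).1 with h1 | h1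
    · have := hm a ha
      rw [Finset.mem_Icc] at this
      omega
    · have hb : a - 1 ∈ Finset.Icc 1 k := by
        rw [Finset.mem_Icc] at ha ⊢; omega
      have h2 := ih (a - 1) (by omega) hb
      have h3 := hf (a - 1) hb a ha (by omega)
      omega

lemma eq_id_of_smo {k : ℕ} {f g : ℕ → ℕ}
    (hf : ∀ x ∈ Finset.Icc 1 k, ∀ y ∈ Finset.Icc 1 k, x < y → f x < f y)
    (hg : ∀ x ∈ Finset.Icc 1 k, ∀ y ∈ Finset.Icc 1 k, x < y → g x < g y)
    (hmf : ∀ x ∈ Finset.Icc 1 k, f x ∈ Finset.Icc 1 k)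
    (hmg : ∀ x ∈ Finset.Icc 1 k, g x ∈ Finset.Icc 1 k)
    (hgf : ∀ x ∈ Finset.Icc 1 k, g (f x) = x) :
    ∀ a ∈ Finset.Icc 1 k, f a = a := by
  intro a ha
  have h1 : a ≤ f a := lower_of_smo hf hmf a ha
  have h2 : f a ≤ g (f a) := lower_of_smo hg hmg (f a) (hmf a ha)
  rw [hgf a ha] at h2
  omega

lemma I_inj {n : ℕ} {p p' : Equiv.Perm ℕ} (hp : PermOn n p) (hp' : PermOn n p')
    (h : I n p = I n p') : p = p' := by
  have key : ∀ (q q' : Equiv.Perm ℕ), PermOn n q → PermOn n q' → I n q = I n q' →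
      ∀ x ∈ Finset.Icc 1 n, ∀ y ∈ Finset.Icc 1 n, x < y → q'⁻¹ (q x) < q'⁻¹ (q y) := by
    intro q q' hq hq' hI x hx y hy hxy
    have hne : q x ≠ q y := fun hc => absurd (q.injective hc) (Nat.ne_of_lt hxy)
    rcases lt_or_gt_of_ne hne with h1 | h1
    · -- q x < q y, so (q x, q y) ∉ I q
      have hmem : (q x, q y) ∉ I n q := by
        rw [mem_I]
        rintro ⟨-, -, hc⟩
        simp only [Equiv.Perm.inv_apply_self] at hc
        omega
      rw [hI, mem_I] at hmem
      push_neg at hmem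
      have := hmem ⟨hq.maps hx, hq.maps hy⟩ h1
      have hne2 : q'⁻¹ (q x) ≠ q'⁻¹ (q y) := fun hc =>
        absurd (q'⁻¹.injective hc) hne
      omega
    · have hmem : (q y, q x) ∈ I n q := by
        rw [mem_I]
        exact ⟨⟨hq.maps hy, hq.maps hx⟩, h1, by simpa using hxy⟩
      rw [hI, mem_I] at hmem
      exact hmem.2.2
  apply Equiv.ext
  intro x
  by_cases hx : x ∈ Finset.Icc 1 n
  · have hres : ∀ a ∈ Finset.Icc 1 n, p'⁻¹ (p a) = a := by
      apply eq_id_of_smo (g := fun a => p⁻¹ (p' a))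
      · exact key p p' hp hp' h
      · exact key p' p hp' hp h.symm
      · intro a ha; exact hp'.inv.maps (hp.maps ha)
      · intro a ha; exact hp.inv.maps (hp'.maps ha)
      · intro a _; simp
    have := hres x hx
    calc p x = p' (p'⁻¹ (p x)) := by simp
    _ = p' x := by rw [this]
  · rw [hp x hx, hp' x hx]

lemma I_one (n : ℕ) : I n 1 = ∅ := by
  ext ⟨a, b⟩
  rw [mem_I]
  simp only [Finset.notMem_empty, iff_false]
  rintro ⟨-, h1, h2⟩
  simp only [inv_one, Equiv.Perm.one_apply] at h2
  omega

/-- transitivity of a set of pairs. -/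
def TransOn (S : Finset (ℕ × ℕ)) : Prop :=
  ∀ a b c : ℕ, (a, b) ∈ S → (b, c) ∈ S → (a, c) ∈ S

/-- co-transitivity. -/
def CoTransOn (n : ℕ) (S : Finset (ℕ × ℕ)) : Prop :=
  ∀ a b c : ℕ, (a, c) ∈ S → a < b → b < c → b ∈ Finset.Icc 1 n →
    (a, b) ∈ S ∨ (b, c) ∈ S

lemma I_trans {n : ℕ} (w : Equiv.Perm ℕ) : TransOn (I n w) := by
  intro a b c h1 h2
  rw [mem_I] at h1 h2 ⊢
  exact ⟨⟨h1.1.1, h2.1.2⟩, h1.2.1.trans h2.2.1, h2.2.2.trans h1.2.2⟩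

lemma I_cotrans {n : ℕ} (w : Equiv.Perm ℕ) : CoTransOn n (I n w) := by
  intro a b c h1 hab hbc hb
  rw [mem_I] at h1
  rcases lt_or_ge (w⁻¹ b) (w⁻¹ a) with h | h
  · exact Or.inl (mem_I.mpr ⟨⟨h1.1.1, hb⟩, hab, h⟩)
  · refine Or.inr (mem_I.mpr ⟨⟨hb, h1.1.2⟩, hbc, lt_of_lt_of_le h1.2.2 h⟩)

lemma compl_trans {n : ℕ} {S : Finset (ℕ × ℕ)} (hsub : S ⊆ allPairs n)
    (hct : CoTransOn n S) : TransOn (allPairs n \ S) := by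
  intro a b c h1 h2
  rw [Finset.mem_sdiff, mem_allPairs] at h1 h2 ⊢
  refine ⟨⟨⟨h1.1.1.1, h2.1.1.2⟩, h1.1.2.trans h2.1.2⟩, ?_⟩
  intro hc
  rcases hct a b c hc h1.1.2 h2.1.2 h1.1.1.2 with h | h
  · exact h1.2 h
  · exact h2.2 h

lemma compl_cotrans {n : ℕ} {S : Finset (ℕ × ℕ)} (hsub : S ⊆ allPairs n)
    (ht : TransOn S) : CoTransOn n (allPairs n \ S) := by
  intro a b c h1 hab hbc hb
  rw [Finset.mem_sdiff, mem_allPairs] at h1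
  by_contra hc
  push_neg at hc
  rcases hc with ⟨hc1, hc2⟩
  rw [Finset.mem_sdiff, mem_allPairs] at hc1 hc2
  push_neg at hc1 hc2
  have m1 : (a, b) ∈ S := hc1 ⟨⟨h1.1.1.1, hb⟩, hab⟩
  have m2 : (b, c) ∈ S := hc2 ⟨⟨hb, h1.1.1.2⟩, hbc⟩
  exact h1.2 (ht a b c m1 m2)

end Aux3
section Aux4

lemma bij_helper {n : ℕ} {f : ℕ → ℕ} (hfix : ∀ a, a ∉ Finset.Icc 1 n → f a = a)
    (hmap : ∀ a ∈ Finset.Icc 1 n, f a ∈ Finset.Icc 1 n)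
    (hinj : ∀ a ∈ Finset.Icc 1 n, ∀ b ∈ Finset.Icc 1 n, f a = f b → a = b) :
    Function.Bijective f := by
  have hinj' : Function.Injective f := by
    intro x y hxy
    by_cases hx : x ∈ Finset.Icc 1 n <;> by_cases hy : y ∈ Finset.Icc 1 n
    · exact hinj x hx y hy hxy
    · exfalso; rw [hfix y hy] at hxy; rw [← hxy] at hy; exact hy (hmap x hx)
    · exfalso; rw [hfix x hx] at hxy; rw [hxy] at hx; exact hx (hmap y hy)
    · rw [hfix x hx, hfix y hy] at hxy; exact hxy
  refine ⟨hinj', ?_⟩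
  intro b
  by_cases hb : b ∈ Finset.Icc 1 n
  · have himg : (Finset.Icc 1 n).image f = Finset.Icc 1 n := by
      apply Finset.eq_of_subset_of_card_le
      · intro x hx
        rw [Finset.mem_image] at hx
        obtain ⟨a, ha, rfl⟩ := hx
        exact hmap a ha
      · rw [Finset.card_image_of_injective _ hinj']
    rw [← himg] at hb
    rw [Finset.mem_image] at hb
    obtain ⟨a, _, ha⟩ := hb
    exact ⟨a, ha⟩
  · exact ⟨b, hfix b hb⟩

lemma exists_perm_of_set {n : ℕ} {S : Finset (ℕ × ℕ)} (hsub : S ⊆ allPairs n)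
    (ht : TransOn S) (hct : CoTransOn n S) :
    ∃ w : Equiv.Perm ℕ, PermOn n w ∧ I n w = S := by
  classical
  set ltS : ℕ → ℕ → Prop := fun a b => (a < b ∧ (a, b) ∉ S) ∨ (b < a ∧ (b, a) ∈ S)
    with hltS
  have hirr : ∀ a, ¬ ltS a a := by intro a h; rcases h with ⟨h, -⟩ | ⟨h, -⟩ <;> omega
  have htot : ∀ a b, a ≠ b → ltS a b ∨ ltS b a := by
    intro a b hab
    rcases Nat.lt_or_ge a b with h | h
    · by_cases hS : (a, b) ∈ S
      · exact Or.inr (Or.inr ⟨h, hS⟩)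
      · exact Or.inl (Or.inl ⟨h, hS⟩)
    · have h' : b < a := by omega
      by_cases hS : (b, a) ∈ S
      · exact Or.inl (Or.inr ⟨h', hS⟩)
      · exact Or.inr (Or.inl ⟨h', hS⟩)
  have hbnd : ∀ a b, (a, b) ∈ S → a < b ∧ a ∈ Finset.Icc 1 n ∧ b ∈ Finset.Icc 1 n := by
    intro a b h
    have := hsub h
    rw [mem_allPairs] at this
    exact ⟨this.2, this.1.1, this.1.2⟩
  have htrans : ∀ a b c, a ∈ Finset.Icc 1 n → b ∈ Finset.Icc 1 n → c ∈ Finset.Icc 1 n →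
      ltS a b → ltS b c → ltS a c := by
    intro a b c ha hb hc h1 h2
    rcases h1 with ⟨hab, hnS⟩ | ⟨hba, hS⟩
    · rcases h2 with ⟨hbc, hnS2⟩ | ⟨hcb, hS2⟩
      · -- a<b ∉S, b<c ∉S
        refine Or.inl ⟨by omega, fun hS3 => ?_⟩
        rcases hct a b c hS3 hab hbc hb with h | h
        · exact hnS h
        · exact hnS2 h
      · -- a<b ∉S, c<b (c,b)∈S
        rcases Nat.lt_trichotomy a c with h | h | h
        · refine Or.inl ⟨h, fun hS3 => hnS (ht a c b hS3 hS2)⟩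
        · exfalso; subst h; exact hnS hS2
        · refine Or.inr ⟨h, ?_⟩
          rcases hct c a b hS2 h hab ha with h' | h'
          · exact h'
          · exact absurd h' hnS
    · rcases h2 with ⟨hbc, hnS2⟩ | ⟨hcb, hS2⟩
      · -- b<a (b,a)∈S, b<c ∉S
        rcases Nat.lt_trichotomy a c with h | h | h
        · refine Or.inl ⟨h, fun hS3 => hnS2 (ht b a c hS hS3)⟩
        · exfalso; subst h; exact hnS2 hS
        · refine Or.inr ⟨h, ?_⟩
          rcases hct b c a hS hbc h hc with h' | h'
          · exact absurd h' hnS2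
          · exact h'
      · exact Or.inr ⟨by omega, ht c b a hS2 hS⟩
  set rk : ℕ → ℕ := fun a => 1 + ((Finset.Icc 1 n).filter (fun x => ltS x a)).card
    with hrk
  have hrkmono : ∀ a ∈ Finset.Icc 1 n, ∀ b ∈ Finset.Icc 1 n, ltS a b → rk a < rk b := by
    intro a ha b hb h
    have hss : ((Finset.Icc 1 n).filter (fun x => ltS x a)) ⊂
        ((Finset.Icc 1 n).filter (fun x => ltS x b)) := by
      constructor
      · intro x hx
        rw [Finset.mem_filter] at hx ⊢
        exact ⟨hx.1, htrans x a b hx.1 ha hb hx.2 h⟩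
      · intro hcon
        have : a ∈ (Finset.Icc 1 n).filter (fun x => ltS x a) :=
          hcon (Finset.mem_filter.mpr ⟨ha, h⟩)
        rw [Finset.mem_filter] at this
        exact hirr a this.2
    have := Finset.card_lt_card hss
    simp only [hrk]
    omega
  have hrkmem : ∀ a ∈ Finset.Icc 1 n, rk a ∈ Finset.Icc 1 n := by
    intro a ha
    have hsub2 : ((Finset.Icc 1 n).filter (fun x => ltS x a)) ⊆ (Finset.Icc 1 n).erase a := by
      intro x hx
      rw [Finset.mem_filter] at hx
      rw [Finset.mem_erase]
      exact ⟨fun hc => hirr a (hc ▸ hx.2), hx.1⟩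
    have h1 := Finset.card_le_card hsub2
    have h2 : ((Finset.Icc 1 n).erase a).card = n - 1 := by
      rw [Finset.card_erase_of_mem ha, Nat.card_Icc]; omega
    rw [Finset.mem_Icc] at ha ⊢
    simp only [hrk]
    omega
  set g : ℕ → ℕ := fun a => if a ∈ Finset.Icc 1 n then rk a else a with hg
  have hgfix : ∀ a, a ∉ Finset.Icc 1 n → g a = a := by
    intro a ha; simp only [hg, if_neg ha]
  have hgmap : ∀ a ∈ Finset.Icc 1 n, g a ∈ Finset.Icc 1 n := by
    intro a ha; simp only [hg, if_pos ha]; exact hrkmem a ha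
  have hgval : ∀ a ∈ Finset.Icc 1 n, g a = rk a := by
    intro a ha; simp only [hg, if_pos ha]
  have hbij : Function.Bijective g := by
    apply bij_helper hgfix hgmap
    intro a ha b hb hab
    rw [hgval a ha, hgval b hb] at hab
    by_contra hne
    rcases htot a b hne with h | h
    · have := hrkmono a ha b hb h; omega
    · have := hrkmono b hb a ha h; omega
  set e : Equiv.Perm ℕ := Equiv.ofBijective g hbij with he
  have hecoe : ∀ x, e x = g x := fun x => rfl
  refine ⟨e⁻¹, ?_, ?_⟩
  · intro i hi
    have : e i = i := by rw [hecoe, hgfix i hi]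
    calc e⁻¹ i = e⁻¹ (e i) := by rw [this]
    _ = i := Equiv.Perm.inv_apply_self e i
  · ext ⟨a, b⟩
    rw [mem_I]
    simp only [inv_inv]
    constructor
    · rintro ⟨⟨ha, hb⟩, hab, hlt⟩
      rw [hecoe, hecoe, hgval a ha, hgval b hb] at hlt
      have hltS : ltS b a := by
        by_contra hc
        rcases htot a b (by omega) with h | h
        · have := hrkmono a ha b hb h; omega
        · exact hc h
      rcases hltS with ⟨h, -⟩ | ⟨-, h⟩
      · omega
      · exact h
    · intro hS
      obtain ⟨hab, ha, hb⟩ := hbnd a b hS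
      refine ⟨⟨ha, hb⟩, hab, ?_⟩
      rw [hecoe, hecoe, hgval a ha, hgval b hb]
      exact hrkmono b hb a ha (Or.inr ⟨hab, hS⟩)

end Aux4
section Aux5

variable {n : ℕ} {S₁ S₂ : Finset (ℕ × ℕ)}

/-- transitive closure of the union of two pair sets. -/
noncomputable def clos (n : ℕ) (S₁ S₂ : Finset (ℕ × ℕ)) : Finset (ℕ × ℕ) :=
  (allPairs n).filter
    (fun p => Relation.TransGen (fun a b => (a, b) ∈ S₁ ∨ (a, b) ∈ S₂) p.1 p.2)

lemma tg_bnd (hs1 : S₁ ⊆ allPairs n) (hs2 : S₂ ⊆ allPairs n) {a b : ℕ}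
    (h : Relation.TransGen (fun a b => (a, b) ∈ S₁ ∨ (a, b) ∈ S₂) a b) :
    a < b ∧ a ∈ Finset.Icc 1 n ∧ b ∈ Finset.Icc 1 n := by
  have step : ∀ x y : ℕ, ((x, y) ∈ S₁ ∨ (x, y) ∈ S₂) →
      x < y ∧ x ∈ Finset.Icc 1 n ∧ y ∈ Finset.Icc 1 n := by
    intro x y hxy
    rcases hxy with h' | h'
    · have := hs1 h'; rw [mem_allPairs] at this; exact ⟨this.2, this.1.1, this.1.2⟩
    · have := hs2 h'; rw [mem_allPairs] at this; exact ⟨this.2, this.1.1, this.1.2⟩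
  induction h with
  | single h' => exact step _ _ h'
  | tail _ h' ih =>
    have := step _ _ h'
    exact ⟨ih.1.trans this.1, ih.2.1, this.2.2⟩

lemma mem_clos {a b : ℕ} :
    (a, b) ∈ clos n S₁ S₂ ↔ (a, b) ∈ allPairs n ∧
      Relation.TransGen (fun a b => (a, b) ∈ S₁ ∨ (a, b) ∈ S₂) a b := by
  simp [clos, Finset.mem_filter]

lemma subset_clos_left (hs1 : S₁ ⊆ allPairs n) : S₁ ⊆ clos n S₁ S₂ := by
  intro p hp
  rcases p with ⟨a, b⟩
  rw [mem_clos]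
  exact ⟨hs1 hp, Relation.TransGen.single (Or.inl hp)⟩

lemma subset_clos_right (hs2 : S₂ ⊆ allPairs n) : S₂ ⊆ clos n S₁ S₂ := by
  intro p hp
  rcases p with ⟨a, b⟩
  rw [mem_clos]
  exact ⟨hs2 hp, Relation.TransGen.single (Or.inr hp)⟩

lemma clos_trans (hs1 : S₁ ⊆ allPairs n) (hs2 : S₂ ⊆ allPairs n) :
    TransOn (clos n S₁ S₂) := by
  intro a b c h1 h2
  rw [mem_clos] at h1 h2 ⊢
  refine ⟨?_, h1.2.trans h2.2⟩
  rw [mem_allPairs] at h1 h2 ⊢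
  exact ⟨⟨(h1.1).1.1, (h2.1).1.2⟩, (h1.1).2.trans (h2.1).2⟩

lemma clos_cotrans (hs1 : S₁ ⊆ allPairs n) (hs2 : S₂ ⊆ allPairs n)
    (hc1 : CoTransOn n S₁) (hc2 : CoTransOn n S₂) : CoTransOn n (clos n S₁ S₂) := by
  set R : ℕ → ℕ → Prop := fun a b => (a, b) ∈ S₁ ∨ (a, b) ∈ S₂ with hR
  have hRco : ∀ a b c : ℕ, R a c → a < b → b < c → b ∈ Finset.Icc 1 n → R a b ∨ R b c := by
    intro a b c h hab hbc hb
    rcases h with h | h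
    · rcases hc1 a b c h hab hbc hb with h' | h'
      · exact Or.inl (Or.inl h')
      · exact Or.inr (Or.inl h')
    · rcases hc2 a b c h hab hbc hb with h' | h'
      · exact Or.inl (Or.inr h')
      · exact Or.inr (Or.inr h')
  have key : ∀ a c : ℕ, Relation.TransGen R a c → ∀ b : ℕ, a < b → b < c →
      b ∈ Finset.Icc 1 n → Relation.TransGen R a b ∨ Relation.TransGen R b c := by
    intro a c h
    induction h with
    | single h' =>
      intro b hab hbc hb
      rcases hRco _ b _ h' hab hbc hb with h'' | h''
      · exact Or.inl (Relation.TransGen.single h'')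
      · exact Or.inr (Relation.TransGen.single h'')
    | @tail x c htg h' ih =>
      intro b hab hbc hb
      rcases Nat.lt_trichotomy b x with h1 | h1 | h1
      · rcases ih b hab h1 hb with h'' | h''
        · exact Or.inl h''
        · exact Or.inr (h''.tail h')
      · subst h1; exact Or.inl htg
      · rcases hRco x b c h' h1 hbc hb with h'' | h''
        · exact Or.inl (htg.tail h'')
        · exact Or.inr (Relation.TransGen.single h'')
  intro a b c h hab hbc hb
  rw [mem_clos] at h
  rcases key a c h.2 b hab hbc hb with h' | h'
  · refine Or.inl (mem_clos.mpr ⟨?_, h'⟩)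
    rw [mem_allPairs] at h ⊢
    exact ⟨⟨h.1.1.1, hb⟩, hab⟩
  · refine Or.inr (mem_clos.mpr ⟨?_, h'⟩)
    rw [mem_allPairs] at h ⊢
    exact ⟨⟨hb, h.1.1.2⟩, hbc⟩

lemma clos_least {T : Finset (ℕ × ℕ)} (h1 : S₁ ⊆ T) (h2 : S₂ ⊆ T) (ht : TransOn T) :
    clos n S₁ S₂ ⊆ T := by
  intro p hp
  rcases p with ⟨a, b⟩
  rw [mem_clos] at hp
  obtain ⟨-, htg⟩ := hp
  induction htg with
  | single h' => rcases h' with h' | h'; exacts [h1 h', h2 h']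
  | @tail x c htg h' ih =>
    have hxc : (x, c) ∈ T := by rcases h' with h' | h'; exacts [h1 h', h2 h']
    exact ht a x c ih hxc

end Aux5
section Aux6

/-- the block permutation of a Wachs permutation, as a function. -/
noncomputable def tf (n : ℕ) (v : Equiv.Perm ℕ) : ℕ → ℕ :=
  fun s => if 1 ≤ s ∧ s ≤ (n+1)/2 then (v (2*s-1) + 1)/2 else s

/-- the descent set of a Wachs permutation. -/
noncomputable def Tset (n : ℕ) (v : Equiv.Perm ℕ) : Finset ℕ :=
  (Finset.Icc 1 (n/2)).filter (fun j => v⁻¹ (2*j) < v⁻¹ (2*j-1))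

noncomputable def dfun (n : ℕ) (v : Equiv.Perm ℕ) (s : ℕ) : ℕ :=
  if n % 2 = 1 ∧ ∃ t, 1 ≤ t ∧ t ≤ s ∧ v (2*t-1) = n then 1 else 0

variable {n : ℕ} {v : Equiv.Perm ℕ}

lemma wachs_pair (hv : IsWachs n v) {j : ℕ} (hj1 : 1 ≤ j) (hj2 : 2*j ≤ n) :
    v⁻¹ (2*j) = v⁻¹ (2*j-1) + 1 ∨ v⁻¹ (2*j-1) = v⁻¹ (2*j) + 1 := by
  have hmem : 2*j-1 ∈ Finset.Icc 1 (n-1) := by rw [Finset.mem_Icc]; omega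
  have hstar : star n (2*j-1) = 2*j := by
    unfold star
    have h1 : ¬ ((2*j-1) % 2 = 0) := by omega
    rw [if_neg h1, if_pos (by omega : 2*j-1+1 ≤ n)]
    omega
  have h := hv.2 _ hmem
  rw [hstar] at h
  have hne : v⁻¹ (2*j-1) ≠ v⁻¹ (2*j) := fun hc => by
    have := v⁻¹.injective hc; omega
  rw [abs_le] at h
  omega

lemma tf_eq (s : ℕ) (h1 : 1 ≤ s) (h2 : s ≤ (n+1)/2) :
    tf n v s = (v (2*s-1) + 1)/2 := by
  unfold tf; rw [if_pos ⟨h1, h2⟩]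

lemma tf_maps (hv : IsWachs n v) (hn : 1 ≤ n) :
    ∀ s ∈ Finset.Icc 1 ((n+1)/2), tf n v s ∈ Finset.Icc 1 ((n+1)/2) := by
  intro s hs
  rw [Finset.mem_Icc] at hs
  rw [tf_eq s hs.1 hs.2, Finset.mem_Icc]
  have hq : 2*s-1 ∈ Finset.Icc 1 n := by rw [Finset.mem_Icc]; omega
  have := hv.1.maps hq
  rw [Finset.mem_Icc] at this
  omega

lemma tf_injOn (hv : IsWachs n v) :
    ∀ s ∈ Finset.Icc 1 ((n+1)/2), ∀ s' ∈ Finset.Icc 1 ((n+1)/2),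
      tf n v s = tf n v s' → s = s' := by
  intro s hs s' hs' heq
  by_contra hne
  rw [Finset.mem_Icc] at hs hs'
  rw [tf_eq s hs.1 hs.2, tf_eq s' hs'.1 hs'.2] at heq
  set x := v (2*s-1) with hxdef
  set y := v (2*s'-1) with hydef
  have hxm : x ∈ Finset.Icc 1 n := hv.1.maps (by rw [Finset.mem_Icc]; omega)
  have hym : y ∈ Finset.Icc 1 n := hv.1.maps (by rw [Finset.mem_Icc]; omega)
  rw [Finset.mem_Icc] at hxm hym
  have hne2 : x ≠ y := fun hc => hne (by
    have := v.injective (hxdef ▸ hydef ▸ hc); omega)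
  set j := (x+1)/2 with hjdef
  have hval : (x = 2*j-1 ∧ y = 2*j) ∨ (x = 2*j ∧ y = 2*j-1) := by omega
  have hj1 : 1 ≤ j := by omega
  have hj2 : 2*j ≤ n := by omega
  have hpair := wachs_pair hv hj1 hj2
  have hvx : v⁻¹ x = 2*s-1 := by rw [hxdef]; simp
  have hvy : v⁻¹ y = 2*s'-1 := by rw [hydef]; simp
  rcases hval with ⟨hx', hy'⟩ | ⟨hx', hy'⟩ <;> rw [hx'] at hvx <;> rw [hy'] at hvy <;> omega

lemma tf_bij (hv : IsWachs n v) (hn : 1 ≤ n) : Function.Bijective (tf n v) := by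
  apply bij_helper (n := (n+1)/2)
  · intro a ha
    rw [Finset.mem_Icc] at ha
    unfold tf
    rw [if_neg (by omega)]
  · exact tf_maps hv hn
  · exact tf_injOn hv

/-- main structure lemma for Wachs permutations. -/
lemma structE (hv : IsWachs n v) :
    ∀ s, s ≤ (n+1)/2 → ∀ a ∈ Finset.Icc 1 n,
      (v⁻¹ a ≤ 2*s - dfun n v s ↔ ∃ t, 1 ≤ t ∧ t ≤ s ∧ tf n v t = (a+1)/2) := by
  intro s
  induction s with
  | zero =>
    intro _ a ha
    rw [Finset.mem_Icc] at ha
    have hva : v⁻¹ a ∈ Finset.Icc 1 n := hv.1.inv.maps (Finset.mem_Icc.mpr ha)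
    rw [Finset.mem_Icc] at hva
    constructor
    · intro h; omega
    · rintro ⟨t, ht1, ht2, -⟩; omega
  | succ s ih =>
    intro hs1 a ha
    have ihs := ih (by omega)
    have hamem := ha
    rw [Finset.mem_Icc] at ha
    have hva : v⁻¹ a ∈ Finset.Icc 1 n := hv.1.inv.maps hamem
    rw [Finset.mem_Icc] at hva
    have hq1 : (2*(s+1)-1 : ℕ) ∈ Finset.Icc 1 n := by rw [Finset.mem_Icc]; omega
    set x := v (2*(s+1)-1) with hxdef
    have hxm : x ∈ Finset.Icc 1 n := hv.1.maps hq1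
    rw [Finset.mem_Icc] at hxm
    have hvx : v⁻¹ x = 2*(s+1)-1 := by rw [hxdef]; simp
    have htfs1 : tf n v (s+1) = (x+1)/2 := tf_eq (s+1) (by omega) hs1
    have hinj : ∀ b c : ℕ, v⁻¹ b = v⁻¹ c → b = c := fun b c h => v⁻¹.injective h
    by_cases hds : dfun n v s = 0
    · -- no singleton so far
      have hds' : ¬ (n % 2 = 1 ∧ ∃ t, 1 ≤ t ∧ t ≤ s ∧ v (2*t-1) = n) := by
        intro hc; unfold dfun at hds; rw [if_pos hc] at hds; omega
      by_cases hxn : n % 2 = 1 ∧ x = n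
      · -- the singleton value n appears at position 2s+1
        obtain ⟨hoddx, hxnx⟩ := hxn
        have hxn : n % 2 = 1 ∧ x = n := ⟨hoddx, hxnx⟩
        have hds1 : dfun n v (s+1) = 1 := by
          unfold dfun
          rw [if_pos ⟨hxn.1, s+1, by omega, by omega, hxn.2⟩]
        rw [hds1]
        constructor
        · intro h
          rcases Nat.lt_or_ge (v⁻¹ a) (2*(s+1)-1) with h' | h'
          · obtain ⟨t, ht⟩ := (ihs a hamem).mp (by omega)
            exact ⟨t, ht.1, by omega, ht.2.2⟩
          · have hax : a = x := hinj a x (by omega)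
            exact ⟨s+1, by omega, by omega, by rw [htfs1, hax]⟩
        · rintro ⟨t, ht1, ht2, ht3⟩
          rcases Nat.lt_or_ge t (s+1) with h' | h'
          · have := (ihs a hamem).mpr ⟨t, ht1, by omega, ht3⟩
            omega
          · have ht' : t = s+1 := by omega
            rw [ht', htfs1] at ht3
            have hax : a = x := by omega
            rw [hax]; omega
      · -- a full pair occupies positions 2s+1, 2s+2
        set j := (x+1)/2 with hjdef
        have hj1 : 1 ≤ j := by omega
        have hj2 : 2*j ≤ n := by omega
        have hnotUs : ∀ b ∈ Finset.Icc 1 n, (b+1)/2 = j → ¬ (v⁻¹ b ≤ 2*s - dfun n v s) := by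
          intro b hb hbj hc
          obtain ⟨t, ht1, ht2, ht3⟩ := (ihs b hb).mp hc
          have : v⁻¹ x ≤ 2*s - dfun n v s :=
            (ihs x (Finset.mem_Icc.mpr hxm)).mpr ⟨t, ht1, ht2, by rw [ht3, hbj]⟩
          omega
        have hpair := wachs_pair hv hj1 hj2
        have hb1 := hnotUs (2*j-1) (Finset.mem_Icc.mpr (by omega)) (by omega)
        have hb2 := hnotUs (2*j) (Finset.mem_Icc.mpr (by omega)) (by omega)
        have hxval : x = 2*j-1 ∨ x = 2*j := by omega
        have hpos : (v⁻¹ (2*j-1) = 2*s+1 ∧ v⁻¹ (2*j) = 2*s+2) ∨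
            (v⁻¹ (2*j) = 2*s+1 ∧ v⁻¹ (2*j-1) = 2*s+2) := by
          rcases hxval with h' | h' <;> rw [h'] at hvx <;> omega
        have hds1 : dfun n v (s+1) = 0 := by
          unfold dfun
          rw [if_neg]
          rintro ⟨hodd, t, ht1, ht2, ht3⟩
          rcases Nat.lt_or_ge t (s+1) with h' | h'
          · exact hds' ⟨hodd, t, ht1, by omega, ht3⟩
          · have : t = s+1 := by omega
            rw [this] at ht3
            exact hxn ⟨hodd, by rw [hxdef, ht3]⟩
        rw [hds1]
        constructor
        · intro h
          rcases Nat.lt_or_ge (v⁻¹ a) (2*s+1) with h' | h'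
          · obtain ⟨t, ht⟩ := (ihs a hamem).mp (by omega)
            exact ⟨t, ht.1, by omega, ht.2.2⟩
          · have haj : a = 2*j-1 ∨ a = 2*j := by
              rcases hpos with ⟨hp1, hp2⟩ | ⟨hp1, hp2⟩ <;>
                rcases (by omega : v⁻¹ a = 2*s+1 ∨ v⁻¹ a = 2*s+2) with h'' | h'' <;>
                  [exact Or.inl (hinj a _ (by omega));
                   exact Or.inr (hinj a _ (by omega));
                   exact Or.inr (hinj a _ (by omega));
                   exact Or.inl (hinj a _ (by omega))]
            exact ⟨s+1, by omega, by omega, by rw [htfs1]; omega⟩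
        · rintro ⟨t, ht1, ht2, ht3⟩
          rcases Nat.lt_or_ge t (s+1) with h' | h'
          · have := (ihs a hamem).mpr ⟨t, ht1, by omega, ht3⟩
            omega
          · have ht' : t = s+1 := by omega
            rw [ht', htfs1] at ht3
            have haj : a = 2*j-1 ∨ a = 2*j := by omega
            rcases haj with h'' | h'' <;> rcases hpos with ⟨hp1, hp2⟩ | ⟨hp1, hp2⟩ <;>
              rw [h''] <;> omega
    · -- the singleton has already appeared: positions 2s, 2s+1
      have hds1' : dfun n v s = 1 := by unfold dfun at hds ⊢; split_ifs at hds ⊢ <;> omega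
      have hcond : n % 2 = 1 ∧ ∃ t, 1 ≤ t ∧ t ≤ s ∧ v (2*t-1) = n := by
        unfold dfun at hds1'; by_contra hc; rw [if_neg hc] at hds1'; omega
      obtain ⟨hodd, t0, ht01, ht02, ht03⟩ := hcond
      have hds1 : dfun n v (s+1) = 1 := by
        unfold dfun; rw [if_pos ⟨hodd, t0, ht01, by omega, ht03⟩]
      rw [hds1]
      -- x := v (2*s)
      have hq2 : (2*s : ℕ) ∈ Finset.Icc 1 n := by rw [Finset.mem_Icc]; omega
      set y := v (2*s) with hydef
      have hym : y ∈ Finset.Icc 1 n := hv.1.maps hq2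
      rw [Finset.mem_Icc] at hym
      have hvy : v⁻¹ y = 2*s := by rw [hydef]; simp
      have hyn : y ≠ n := by
        intro hc
        have h2 : v (2*s) = n := by rw [← hydef, hc]
        have := v.injective (ht03.trans h2.symm)
        omega
      set j := (y+1)/2 with hjdef
      have hj1 : 1 ≤ j := by omega
      have hj2 : 2*j ≤ n := by omega
      have hnotUs : ∀ b ∈ Finset.Icc 1 n, (b+1)/2 = j → ¬ (v⁻¹ b ≤ 2*s - dfun n v s) := by
        intro b hb hbj hc
        obtain ⟨t, ht1, ht2, ht3⟩ := (ihs b hb).mp hc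
        have : v⁻¹ y ≤ 2*s - dfun n v s :=
          (ihs y (Finset.mem_Icc.mpr hym)).mpr ⟨t, ht1, ht2, by rw [ht3, hbj]⟩
        omega
      have hpair := wachs_pair hv hj1 hj2
      have hb1 := hnotUs (2*j-1) (Finset.mem_Icc.mpr (by omega)) (by omega)
      have hb2 := hnotUs (2*j) (Finset.mem_Icc.mpr (by omega)) (by omega)
      have hyval : y = 2*j-1 ∨ y = 2*j := by omega
      have hpos : (v⁻¹ (2*j-1) = 2*s ∧ v⁻¹ (2*j) = 2*s+1) ∨
          (v⁻¹ (2*j) = 2*s ∧ v⁻¹ (2*j-1) = 2*s+1) := by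
        rcases hyval with h' | h' <;> rw [h'] at hvy <;> omega
      have htfj : tf n v (s+1) = j := by
        rw [htfs1]
        have hx2 : x = 2*j-1 ∨ x = 2*j := by
          rcases hpos with ⟨hp1, hp2⟩ | ⟨hp1, hp2⟩
          · exact Or.inr (hinj x _ (by omega))
          · exact Or.inl (hinj x _ (by omega))
        omega
      constructor
      · intro h
        rcases Nat.lt_or_ge (v⁻¹ a) (2*s) with h' | h'
        · obtain ⟨t, ht⟩ := (ihs a hamem).mp (by omega)
          exact ⟨t, ht.1, by omega, ht.2.2⟩
        · have haj : a = 2*j-1 ∨ a = 2*j := by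
            rcases hpos with ⟨hp1, hp2⟩ | ⟨hp1, hp2⟩ <;>
              rcases (by omega : v⁻¹ a = 2*s ∨ v⁻¹ a = 2*s+1) with h'' | h'' <;>
                [exact Or.inl (hinj a _ (by omega));
                 exact Or.inr (hinj a _ (by omega));
                 exact Or.inr (hinj a _ (by omega));
                 exact Or.inl (hinj a _ (by omega))]
          refine ⟨s+1, by omega, by omega, by rw [htfj]; omega⟩
      · rintro ⟨t, ht1, ht2, ht3⟩
        rcases Nat.lt_or_ge t (s+1) with h' | h'
        · have := (ihs a hamem).mpr ⟨t, ht1, by omega, ht3⟩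
          omega
        · have ht' : t = s+1 := by omega
          rw [ht', htfj] at ht3
          have haj : a = 2*j-1 ∨ a = 2*j := by omega
          rcases haj with h'' | h'' <;> rcases hpos with ⟨hp1, hp2⟩ | ⟨hp1, hp2⟩ <;>
            rw [h''] <;> omega

end Aux6
section Aux7

/-- the map `v ↦ (τ, T)`. -/
noncomputable def FW (n : ℕ) (v : Equiv.Perm ℕ) : Equiv.Perm ℕ × Finset ℕ :=
  if h : Function.Bijective (tf n v) then (Equiv.ofBijective _ h, Tset n v) else (1, ∅)

variable {n : ℕ} {v : Equiv.Perm ℕ}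

lemma FW_eq (hv : IsWachs n v) (hn : 1 ≤ n) :
    FW n v = (Equiv.ofBijective _ (tf_bij hv hn), Tset n v) := by
  rw [FW, dif_pos (tf_bij hv hn)]

lemma FW_coe (hv : IsWachs n v) (hn : 1 ≤ n) :
    ∀ x, (FW n v).1 x = tf n v x := by
  rw [FW_eq hv hn]; intro x; rfl

lemma FW_permOn (hv : IsWachs n v) (hn : 1 ≤ n) : PermOn ((n+1)/2) (FW n v).1 := by
  intro i hi
  rw [FW_coe hv hn]
  rw [Finset.mem_Icc] at hi
  unfold tf
  rw [if_neg (by omega)]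

lemma FW_T (hv : IsWachs n v) (hn : 1 ≤ n) : (FW n v).2 = Tset n v := by
  rw [FW_eq hv hn]

lemma FW_Tsub : Tset n v ⊆ Finset.Icc 1 (n/2) := Finset.filter_subset _ _

lemma slot_bound (hv : IsWachs n v) {a s : ℕ} (ha : a ∈ Finset.Icc 1 n)
    (hs1 : 1 ≤ s) (hs2 : s ≤ (n+1)/2) (h : tf n v s = (a+1)/2) :
    2*s - 2 ≤ v⁻¹ a ∧ v⁻¹ a ≤ 2*s := by
  have hE := structE hv
  have hup : v⁻¹ a ≤ 2*s - dfun n v s :=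
    (hE s hs2 a ha).mpr ⟨s, hs1, le_refl s, h⟩
  have hd : dfun n v s = 0 ∨ dfun n v s = 1 := by
    unfold dfun; split_ifs <;> omega
  have hlow : ¬ (v⁻¹ a ≤ 2*(s-1) - dfun n v (s-1)) := by
    intro hc
    obtain ⟨t, ht1, ht2, ht3⟩ := (hE (s-1) (by omega) a ha).mp hc
    have : t = s := tf_injOn hv t (Finset.mem_Icc.mpr (by omega)) s
      (Finset.mem_Icc.mpr ⟨hs1, hs2⟩) (by rw [ht3, h])
    omega
  have hd' : dfun n v (s-1) = 0 ∨ dfun n v (s-1) = 1 := by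
    unfold dfun; split_ifs <;> omega
  omega

lemma charI (hv : IsWachs n v) (hn : 1 ≤ n) {a b : ℕ} :
    (a, b) ∈ I n v ↔ (a ∈ Finset.Icc 1 n ∧ b ∈ Finset.Icc 1 n ∧ a < b ∧
      (((a+1)/2 = (b+1)/2 ∧ (a+1)/2 ∈ Tset n v) ∨
       ((a+1)/2 < (b+1)/2 ∧ ((a+1)/2, (b+1)/2) ∈ I ((n+1)/2) (FW n v).1))) := by
  set tp := (FW n v).1 with htp
  have hcoe := FW_coe hv hn
  have hpm : PermOn ((n+1)/2) tp := FW_permOn hv hn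
  have key : ∀ c ∈ Finset.Icc 1 n,
      (1 ≤ tp⁻¹ ((c+1)/2) ∧ tp⁻¹ ((c+1)/2) ≤ (n+1)/2) ∧
      tf n v (tp⁻¹ ((c+1)/2)) = (c+1)/2 ∧
      2*(tp⁻¹ ((c+1)/2)) - 2 ≤ v⁻¹ c ∧ v⁻¹ c ≤ 2*(tp⁻¹ ((c+1)/2)) := by
    intro c hc
    rw [Finset.mem_Icc] at hc
    have hcm : (c+1)/2 ∈ Finset.Icc 1 ((n+1)/2) := by rw [Finset.mem_Icc]; omega
    have hsm := hpm.inv.maps hcm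
    rw [Finset.mem_Icc] at hsm
    have htf : tf n v (tp⁻¹ ((c+1)/2)) = (c+1)/2 := by
      rw [← hcoe]; exact Equiv.Perm.apply_inv_self tp _
    exact ⟨hsm, htf, slot_bound hv (Finset.mem_Icc.mpr hc) hsm.1 hsm.2 htf⟩
  constructor
  · intro h
    rw [mem_I] at h
    obtain ⟨⟨ha, hb⟩, hab, hba⟩ := h
    refine ⟨ha, hb, hab, ?_⟩
    by_cases hj : (a+1)/2 = (b+1)/2
    · left
      refine ⟨hj, ?_⟩
      rw [Finset.mem_Icc] at ha hb
      have hab' : a = 2*((a+1)/2) - 1 ∧ b = 2*((a+1)/2) := by omega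
      unfold Tset
      rw [Finset.mem_filter, Finset.mem_Icc]
      constructor
      · omega
      · rw [← hab'.1, ← hab'.2]; exact hba
    · right
      rw [Finset.mem_Icc] at ha hb
      have hjlt : (a+1)/2 < (b+1)/2 := by omega
      refine ⟨hjlt, ?_⟩
      obtain ⟨hsa, htfa, hba1, hba2⟩ := key a (Finset.mem_Icc.mpr ha)
      obtain ⟨hsb, htfb, hbb1, hbb2⟩ := key b (Finset.mem_Icc.mpr hb)
      rw [mem_I]
      refine ⟨⟨Finset.mem_Icc.mpr (by omega), Finset.mem_Icc.mpr (by omega)⟩, hjlt, ?_⟩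
      -- need tp⁻¹ ((b+1)/2) < tp⁻¹ ((a+1)/2)
      have hne : v⁻¹ a ≠ v⁻¹ b := fun hc => by have := v⁻¹.injective hc; omega
      have hsne : tp⁻¹ ((a+1)/2) ≠ tp⁻¹ ((b+1)/2) := fun hc => by
        rw [hc, htfb] at htfa; omega
      rcases Nat.lt_trichotomy (tp⁻¹ ((a+1)/2)) (tp⁻¹ ((b+1)/2)) with h' | h' | h'
      · omega
      · exact absurd h' hsne
      · exact h'
  · rintro ⟨ha, hb, hab, hcase⟩
    rw [mem_I]
    refine ⟨⟨ha, hb⟩, hab, ?_⟩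
    rcases hcase with ⟨hj, hT⟩ | ⟨hjlt, hI⟩
    · unfold Tset at hT
      rw [Finset.mem_filter, Finset.mem_Icc] at hT
      rw [Finset.mem_Icc] at ha hb
      have h2' : v⁻¹ (2*((a+1)/2)) < v⁻¹ (2*((a+1)/2) - 1) := hT.2
      have ea : 2*((a+1)/2) - 1 = a := by omega
      have eb : 2*((a+1)/2) = b := by omega
      rw [ea, eb] at h2'
      exact h2' 
    · rw [mem_I] at hI
      obtain ⟨-, -, hlt⟩ := hI
      obtain ⟨hsa, htfa, hba1, hba2⟩ := key a ha
      obtain ⟨hsb, htfb, hbb1, hbb2⟩ := key b hb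
      have hne : v⁻¹ a ≠ v⁻¹ b := fun hc => by
        have := v⁻¹.injective hc; omega
      omega

lemma I_subset_char {u : Equiv.Perm ℕ} (hu : IsWachs n u) (hv : IsWachs n v)
    (hn : 1 ≤ n) :
    I n u ⊆ I n v ↔
      (I ((n+1)/2) (FW n u).1 ⊆ I ((n+1)/2) (FW n v).1 ∧ Tset n u ⊆ Tset n v) := by
  constructor
  · intro h
    constructor
    · intro p hp
      rcases p with ⟨j, k⟩
      have hjk := hp
      rw [mem_I, Finset.mem_Icc, Finset.mem_Icc] at hjk
      obtain ⟨⟨hj, hk⟩, hlt, -⟩ := hjk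
      have hmem : (2*j-1, 2*k-1) ∈ I n u := by
        rw [charI hu hn]
        refine ⟨Finset.mem_Icc.mpr (by omega), Finset.mem_Icc.mpr (by omega),
          by omega, Or.inr ⟨by omega, ?_⟩⟩
        have e1 : (2*j-1+1)/2 = j := by omega
        have e2 : (2*k-1+1)/2 = k := by omega
        rw [e1, e2]
        exact hp
      have := h hmem
      rw [charI hv hn] at this
      obtain ⟨-, -, -, hcase⟩ := this
      have e1 : (2*j-1+1)/2 = j := by omega
      have e2 : (2*k-1+1)/2 = k := by omega
      rw [e1, e2] at hcase
      rcases hcase with ⟨he, -⟩ | ⟨-, hI⟩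
      · omega
      · exact hI
    · intro j hj
      have hjm := hj
      unfold Tset at hjm
      rw [Finset.mem_filter, Finset.mem_Icc] at hjm
      have hmem : (2*j-1, 2*j) ∈ I n u := by
        rw [charI hu hn]
        refine ⟨Finset.mem_Icc.mpr (by omega), Finset.mem_Icc.mpr (by omega),
          by omega, Or.inl ⟨by omega, ?_⟩⟩
        have e1 : (2*j-1+1)/2 = j := by omega
        rw [e1]
        exact hj
      have := h hmem
      rw [charI hv hn] at this
      obtain ⟨-, -, -, hcase⟩ := this
      have e1 : (2*j-1+1)/2 = j := by omega
      have e2 : (2*j+1)/2 = j := by omega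
      rw [e1, e2] at hcase
      rcases hcase with ⟨-, hT⟩ | ⟨hlt, -⟩
      · exact hT
      · omega
  · rintro ⟨hI, hT⟩ p hp
    rcases p with ⟨a, b⟩
    rw [charI hu hn] at hp
    rw [charI hv hn]
    obtain ⟨ha, hb, hab, hcase⟩ := hp
    refine ⟨ha, hb, hab, ?_⟩
    rcases hcase with ⟨hj, hTm⟩ | ⟨hjlt, hIm⟩
    · exact Or.inl ⟨hj, hT hTm⟩
    · exact Or.inr ⟨hjlt, hI hIm⟩

lemma FW_injOn {u : Equiv.Perm ℕ} (hu : IsWachs n u) (hv : IsWachs n v)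
    (hn : 1 ≤ n) (h : FW n u = FW n v) : u = v := by
  have h1 : (FW n u).1 = (FW n v).1 := by rw [h]
  have h2 : Tset n u = Tset n v := by
    rw [← FW_T hu hn, ← FW_T hv hn, h]
  apply I_inj hu.1 hv.1
  apply Finset.Subset.antisymm
  · rw [I_subset_char hu hv hn]
    exact ⟨by rw [h1], by rw [h2]⟩
  · rw [I_subset_char hv hu hn]
    exact ⟨by rw [h1], by rw [h2]⟩

end Aux7
section Aux8

/-- the inverse function of the Wachs permutation associated with `(p, T)`. -/
noncomputable def gW (n : ℕ) (p : Equiv.Perm ℕ) (T : Finset ℕ) (a : ℕ) : ℕ :=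
  if 1 ≤ a ∧ a ≤ n then
    (if n % 2 = 1 ∧ a = n then 2 * (p⁻¹ ((a+1)/2)) - 1
     else if a % 2 = 1 then
       2 * (p⁻¹ ((a+1)/2)) - 1
         - (if n % 2 = 1 ∧ p⁻¹ ((n+1)/2) < p⁻¹ ((a+1)/2) then 1 else 0)
         + (if (a+1)/2 ∈ T then 1 else 0)
     else
       2 * (p⁻¹ ((a+1)/2))
         - (if n % 2 = 1 ∧ p⁻¹ ((n+1)/2) < p⁻¹ ((a+1)/2) then 1 else 0)
         - (if (a+1)/2 ∈ T then 1 else 0))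
  else a

lemma ite01 (c : Prop) [Decidable c] :
    (c ∧ (if c then (1:ℕ) else 0) = 1) ∨ (¬c ∧ (if c then (1:ℕ) else 0) = 0) := by
  by_cases h : c
  · exact Or.inl ⟨h, if_pos h⟩
  · exact Or.inr ⟨h, if_neg h⟩

variable {n : ℕ} {p : Equiv.Perm ℕ} {T : Finset ℕ}

lemma gW_out {a : ℕ} (h : ¬(1 ≤ a ∧ a ≤ n)) : gW n p T a = a := by
  rw [gW, if_neg h]

lemma gW_pair (hj1 : 1 ≤ (j:ℕ)) (hj2 : 2*j ≤ n) :
    gW n p T (2*j-1) = 2 * (p⁻¹ j) - 1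
      - (if n % 2 = 1 ∧ p⁻¹ ((n+1)/2) < p⁻¹ j then 1 else 0)
      + (if j ∈ T then 1 else 0) ∧
    gW n p T (2*j) = 2 * (p⁻¹ j)
      - (if n % 2 = 1 ∧ p⁻¹ ((n+1)/2) < p⁻¹ j then 1 else 0)
      - (if j ∈ T then 1 else 0) := by
  constructor
  · rw [gW, if_pos (by omega : 1 ≤ 2*j-1 ∧ 2*j-1 ≤ n), if_neg (by omega),
      if_pos (by omega : (2*j-1) % 2 = 1), (by omega : (2*j-1+1)/2 = j)]
  · rw [gW, if_pos (by omega : 1 ≤ 2*j ∧ 2*j ≤ n), if_neg (by omega),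
      if_neg (by omega : ¬ ((2*j) % 2 = 1)), (by omega : (2*j+1)/2 = j)]

lemma gW_bounds {a : ℕ} (h1 : 1 ≤ a) (h2 : a ≤ n) (hs : 1 ≤ p⁻¹ ((a+1)/2)) :
    (n % 2 = 1 ∧ a = n ∧ gW n p T a = 2 * (p⁻¹ ((a+1)/2)) - 1) ∨
    (¬(n % 2 = 1 ∧ a = n) ∧
      2 * (p⁻¹ ((a+1)/2)) - 1
        - (if n % 2 = 1 ∧ p⁻¹ ((n+1)/2) < p⁻¹ ((a+1)/2) then 1 else 0) ≤ gW n p T a ∧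
      gW n p T a ≤ 2 * (p⁻¹ ((a+1)/2))
        - (if n % 2 = 1 ∧ p⁻¹ ((n+1)/2) < p⁻¹ ((a+1)/2) then 1 else 0)) := by
  rw [gW, if_pos ⟨h1, h2⟩]
  by_cases hsp : n % 2 = 1 ∧ a = n
  · exact Or.inl ⟨hsp.1, hsp.2, if_pos hsp⟩
  · refine Or.inr ⟨hsp, ?_⟩
    rw [if_neg hsp]
    rcases ite01 (n % 2 = 1 ∧ p⁻¹ ((n+1)/2) < p⁻¹ ((a+1)/2)) with ⟨-, ho⟩ | ⟨-, ho⟩ <;>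
      rcases ite01 ((a+1)/2 ∈ T) with ⟨-, he⟩ | ⟨-, he⟩ <;>
        by_cases hpar : a % 2 = 1 <;>
          (first | rw [if_pos hpar] | rw [if_neg hpar]) <;> rw [ho, he] <;> omega

/-- slot facts for the surjectivity construction. -/
lemma gW_slots (hp : PermOn ((n+1)/2) p) (hn : 1 ≤ n) {a : ℕ} (h1 : 1 ≤ a) (h2 : a ≤ n) :
    (1 ≤ p⁻¹ ((a+1)/2) ∧ p⁻¹ ((a+1)/2) ≤ (n+1)/2) ∧
    (1 ≤ p⁻¹ ((n+1)/2) ∧ p⁻¹ ((n+1)/2) ≤ (n+1)/2) ∧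
    (n % 2 = 1 → p⁻¹ ((a+1)/2) = p⁻¹ ((n+1)/2) → a = n) ∧
    (a = n → p⁻¹ ((a+1)/2) = p⁻¹ ((n+1)/2)) := by
  have hm1 : (a+1)/2 ∈ Finset.Icc 1 ((n+1)/2) := Finset.mem_Icc.mpr (by omega)
  have hm2 : (n+1)/2 ∈ Finset.Icc 1 ((n+1)/2) := Finset.mem_Icc.mpr (by omega)
  have hs1 := hp.inv.maps hm1
  have hs2 := hp.inv.maps hm2
  rw [Finset.mem_Icc] at hs1 hs2
  refine ⟨hs1, hs2, ?_, ?_⟩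
  · intro hodd heq
    have := p⁻¹.injective heq
    omega
  · intro h; rw [h]

lemma gW_mono (hp : PermOn ((n+1)/2) p) (hn : 1 ≤ n) {a b : ℕ}
    (h1a : 1 ≤ a) (h2a : a ≤ n) (h1b : 1 ≤ b) (h2b : b ≤ n)
    (hs : p⁻¹ ((a+1)/2) < p⁻¹ ((b+1)/2)) : gW n p T a < gW n p T b := by
  have hka := gW_slots hp hn h1a h2a
  have hkb := gW_slots hp hn h1b h2b
  obtain ⟨hsa, hi0, hlinka, hlinka'⟩ := hka
  obtain ⟨hsb, -, hlinkb, hlinkb'⟩ := hkb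
  have Aa := gW_bounds (p := p) (T := T) h1a h2a hsa.1
  have Ab := gW_bounds (p := p) (T := T) h1b h2b hsb.1
  have hoa := ite01 (n % 2 = 1 ∧ p⁻¹ ((n+1)/2) < p⁻¹ ((a+1)/2))
  have hob := ite01 (n % 2 = 1 ∧ p⁻¹ ((n+1)/2) < p⁻¹ ((b+1)/2))
  rcases hoa with ⟨ho1, ho2⟩ | ⟨ho1, ho2⟩ <;> rcases hob with ⟨hp1, hp2⟩ | ⟨hp1, hp2⟩ <;>
    rcases Aa with ⟨hq1, hq2, hq3⟩ | ⟨hq1, hq2, hq3⟩ <;>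
      rcases Ab with ⟨hr1, hr2, hr3⟩ | ⟨hr1, hr2, hr3⟩ <;>
        rw [ho2] at * <;> rw [hp2] at * <;> omega

end Aux8
section Aux9

variable {n : ℕ} {p : Equiv.Perm ℕ} {T : Finset ℕ}

lemma gW_injIcc (hp : PermOn ((n+1)/2) p) (hn : 1 ≤ n) :
    ∀ a ∈ Finset.Icc 1 n, ∀ b ∈ Finset.Icc 1 n, gW n p T a = gW n p T b → a = b := by
  intro a ha b hb heq
  rw [Finset.mem_Icc] at ha hb
  by_contra hne
  by_cases hj : (a+1)/2 = (b+1)/2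
  · have hj1 : 1 ≤ (a+1)/2 := by omega
    have hj2 : 2*((a+1)/2) ≤ n := by omega
    obtain ⟨e1, e2⟩ := gW_pair (p := p) (T := T) hj1 hj2
    obtain ⟨hsa, hi0, -, -⟩ := gW_slots hp hn (by omega : 1 ≤ a) (by omega : a ≤ n)
    have hcase : (a = 2*((a+1)/2)-1 ∧ b = 2*((a+1)/2)) ∨
        (b = 2*((a+1)/2)-1 ∧ a = 2*((a+1)/2)) := by omega
    have key : gW n p T (2*((a+1)/2)-1) ≠ gW n p T (2*((a+1)/2)) := by
      rcases ite01 (n % 2 = 1 ∧ p⁻¹ ((n+1)/2) < p⁻¹ ((a+1)/2)) with ⟨ho1, ho2⟩ | ⟨ho1, ho2⟩ <;>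
        rcases ite01 ((a+1)/2 ∈ T) with ⟨-, hee⟩ | ⟨-, hee⟩ <;>
          rw [ho2, hee] at e1 e2 <;> omega
    rcases hcase with ⟨f1, f2⟩ | ⟨f1, f2⟩
    · exact key (by rw [← f1, ← f2]; exact heq)
    · exact key (by rw [← f1, ← f2]; exact heq.symm)
  · have hs : p⁻¹ ((a+1)/2) ≠ p⁻¹ ((b+1)/2) := fun hc => hj (p⁻¹.injective hc)
    rcases Nat.lt_or_ge (p⁻¹ ((a+1)/2)) (p⁻¹ ((b+1)/2)) with h | h
    · have := gW_mono (T := T) hp hn ha.1 ha.2 hb.1 hb.2 h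
      omega
    · have := gW_mono (T := T) hp hn hb.1 hb.2 ha.1 ha.2 (by omega)
      omega

lemma gW_maps (hp : PermOn ((n+1)/2) p) (hn : 1 ≤ n) :
    ∀ a ∈ Finset.Icc 1 n, gW n p T a ∈ Finset.Icc 1 n := by
  intro a ha
  rw [Finset.mem_Icc] at ha ⊢
  obtain ⟨hsa, hi0, hlink, hlink'⟩ := gW_slots hp hn ha.1 ha.2
  have A := gW_bounds (p := p) (T := T) ha.1 ha.2 hsa.1
  rcases ite01 (n % 2 = 1 ∧ p⁻¹ ((n+1)/2) < p⁻¹ ((a+1)/2)) with ⟨ho1, ho2⟩ | ⟨ho1, ho2⟩ <;>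
    rw [ho2] at A <;> omega

lemma FW_surj (hn : 1 ≤ n) (hp : PermOn ((n+1)/2) p) (hT : T ⊆ Finset.Icc 1 (n/2)) :
    ∃ v : Equiv.Perm ℕ, IsWachs n v ∧ FW n v = (p, T) := by
  have hbij : Function.Bijective (gW n p T) := by
    apply bij_helper (n := n)
    · intro a ha; rw [Finset.mem_Icc] at ha; exact gW_out ha
    · exact gW_maps hp hn
    · exact gW_injIcc hp hn
  set e : Equiv.Perm ℕ := Equiv.ofBijective _ hbij with he
  have hecoe : ∀ x, e x = gW n p T x := fun x => rfl
  have hvinv : ∀ x, (e⁻¹)⁻¹ x = gW n p T x := by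
    intro x; rw [inv_inv]; exact hecoe x
  have hi0m : 1 ≤ p⁻¹ ((n+1)/2) ∧ p⁻¹ ((n+1)/2) ≤ (n+1)/2 := by
    have := hp.inv.maps (Finset.mem_Icc.mpr ⟨by omega, le_refl ((n+1)/2)⟩)
    rwa [Finset.mem_Icc] at this
  have hwachs : IsWachs n e⁻¹ := by
    constructor
    · intro i hi
      rw [Finset.mem_Icc] at hi
      have h1 : e i = i := by rw [hecoe, gW_out hi]
      calc e⁻¹ i = e⁻¹ (e i) := by rw [h1]
      _ = i := Equiv.Perm.inv_apply_self e i
    · intro i hi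
      rw [Finset.mem_Icc] at hi
      have g1 := hvinv i
      rw [abs_le]
      by_cases hpar : i % 2 = 1
      · have hstar : star n i = i + 1 := by
          unfold star; rw [if_neg (by omega), if_pos (by omega)]
        rw [hstar]
        have g2 := hvinv (i+1)
        obtain ⟨e1, e2⟩ := gW_pair (p := p) (T := T)
          (by omega : 1 ≤ (i+1)/2) (by omega : 2*((i+1)/2) ≤ n)
        have f1 : 2*((i+1)/2)-1 = i := by omega
        have f2 : 2*((i+1)/2) = i+1 := by omega
        rw [f1] at e1; rw [f2] at e2
        obtain ⟨hsa, -, -, -⟩ := gW_slots hp (by omega) (by omega : 1 ≤ i) (by omega : i ≤ n)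
        rcases ite01 (n % 2 = 1 ∧ p⁻¹ ((n+1)/2) < p⁻¹ ((i+1)/2)) with ⟨ho1, ho2⟩ | ⟨ho1, ho2⟩ <;>
          rcases ite01 ((i+1)/2 ∈ T) with ⟨-, hee⟩ | ⟨-, hee⟩ <;>
            rw [ho2, hee] at e1 e2 <;> omega
      · have hstar : star n i = i - 1 := by
          unfold star; rw [if_pos (by omega : i % 2 = 0)]
        rw [hstar]
        have g2 := hvinv (i-1)
        obtain ⟨e1, e2⟩ := gW_pair (p := p) (T := T)
          (by omega : 1 ≤ i/2) (by omega : 2*(i/2) ≤ n)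
        have f1 : 2*(i/2)-1 = i-1 := by omega
        have f2 : 2*(i/2) = i := by omega
        rw [f1] at e1; rw [f2] at e2
        obtain ⟨hsa, -, -, -⟩ := gW_slots hp (by omega) (by omega : 1 ≤ i) (by omega : i ≤ n)
        have fs : (i+1)/2 = i/2 := by omega
        rw [fs] at hsa
        rcases ite01 (n % 2 = 1 ∧ p⁻¹ ((n+1)/2) < p⁻¹ (i/2)) with ⟨ho1, ho2⟩ | ⟨ho1, ho2⟩ <;>
          rcases ite01 ((i/2) ∈ T) with ⟨-, hee⟩ | ⟨-, hee⟩ <;>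
            rw [ho2, hee] at e1 e2 <;> omega
  have htf : ∀ s, tf n e⁻¹ s = p s := by
    intro s
    by_cases hs : 1 ≤ s ∧ s ≤ (n+1)/2
    · have hps : p s ∈ Finset.Icc 1 ((n+1)/2) :=
        hp.maps (Finset.mem_Icc.mpr hs)
      rw [Finset.mem_Icc] at hps
      have hclaim : ∃ a, 1 ≤ a ∧ a ≤ n ∧ (a+1)/2 = p s ∧ gW n p T a = 2*s-1 := by
        by_cases hsp : n % 2 = 1 ∧ p s = (n+1)/2
        · refine ⟨n, by omega, le_refl n, by omega, ?_⟩
          rw [gW, if_pos (by omega : 1 ≤ n ∧ n ≤ n), if_pos ⟨hsp.1, rfl⟩]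
          have hq : p⁻¹ ((n+1)/2) = s := by rw [← hsp.2, Equiv.Perm.inv_apply_self]
          rw [hq]
        · have hj1 : 1 ≤ p s := by omega
          have hj2 : 2*(p s) ≤ n := by omega
          obtain ⟨e1, e2⟩ := gW_pair (p := p) (T := T) hj1 hj2
          have hpin : p⁻¹ (p s) = s := Equiv.Perm.inv_apply_self p s
          rw [hpin] at e1 e2
          rcases ite01 (n % 2 = 1 ∧ p⁻¹ ((n+1)/2) < s) with ⟨ho1, ho2⟩ | ⟨ho1, ho2⟩ <;>
            rcases ite01 ((p s) ∈ T) with ⟨-, hee⟩ | ⟨-, hee⟩ <;>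
              rw [ho2, hee] at e1 e2
          · exact ⟨2*(p s)-1, by omega, by omega, by omega, by omega⟩
          · exact ⟨2*(p s), by omega, by omega, by omega, by omega⟩
          · exact ⟨2*(p s), by omega, by omega, by omega, by omega⟩
          · exact ⟨2*(p s)-1, by omega, by omega, by omega, by omega⟩
      obtain ⟨a, ha1, ha2, haj, hag⟩ := hclaim
      have hea : e a = 2*s-1 := by rw [hecoe]; exact hag
      have hva : e⁻¹ (2*s-1) = a := by rw [← hea, Equiv.Perm.inv_apply_self]
      rw [tf, if_pos hs, hva, haj]
    · rw [tf, if_neg hs]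
      exact (hp s (by rw [Finset.mem_Icc]; omega)).symm
  have htfp : tf n e⁻¹ = ⇑p := funext htf
  have hbj : Function.Bijective (tf n e⁻¹) := by rw [htfp]; exact p.bijective
  refine ⟨e⁻¹, hwachs, ?_⟩
  rw [FW, dif_pos hbj]
  refine Prod.ext ?_ ?_
  · apply Equiv.ext
    intro x
    exact htf x
  · show Tset n e⁻¹ = T
    ext j
    unfold Tset
    rw [Finset.mem_filter, Finset.mem_Icc]
    constructor
    · rintro ⟨hjm, hlt⟩
      have g1 := hvinv (2*j)
      have g2 := hvinv (2*j-1)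
      rw [g1, g2] at hlt
      obtain ⟨e1, e2⟩ := gW_pair (p := p) (T := T) (by omega : 1 ≤ j) (by omega : 2*j ≤ n)
      by_contra hjT
      obtain ⟨hsa, hi0, -, -⟩ := gW_slots hp hn (by omega : 1 ≤ 2*j-1) (by omega : 2*j-1 ≤ n)
      rw [(by omega : (2*j-1+1)/2 = j)] at hsa
      rcases ite01 (n % 2 = 1 ∧ p⁻¹ ((n+1)/2) < p⁻¹ j) with ⟨ho1, ho2⟩ | ⟨ho1, ho2⟩ <;>
        rw [ho2, if_neg hjT] at e1 e2 <;> omega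
    · intro hjT
      have hjm := hT hjT
      rw [Finset.mem_Icc] at hjm
      have g1 := hvinv (2*j)
      have g2 := hvinv (2*j-1)
      refine ⟨hjm, ?_⟩
      rw [g1, g2]
      obtain ⟨e1, e2⟩ := gW_pair (p := p) (T := T) (by omega : 1 ≤ j) (by omega : 2*j ≤ n)
      obtain ⟨hsa, hi0, -, -⟩ := gW_slots hp hn
        (by omega : 1 ≤ 2*j-1) (by omega : 2*j-1 ≤ n)
      rw [(by omega : (2*j-1+1)/2 = j)] at hsa
      rcases ite01 (n % 2 = 1 ∧ p⁻¹ ((n+1)/2) < p⁻¹ j) with ⟨ho1, ho2⟩ | ⟨ho1, ho2⟩ <;>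
        rw [ho2, if_pos hjT] at e1 e2 <;> omega

end Aux9

/-- Theorem `weak-A`. `(W(S_n),≤_R)` is isomorphic to the
direct product `(S_{⌈n/2⌉},≤_R) × P([⌊n/2⌋])`; in particular it is a
complemented lattice (stated elementarily: it is a bounded lattice in which
every element has a complement). -/
theorem wachs_weak_order (n : ℕ) (hn : 1 ≤ n) :
    -- poset isomorphism with the direct product
    (∃ F : Equiv.Perm ℕ → Equiv.Perm ℕ × Finset ℕ,
      Set.BijOn F {w | IsWachs n w}
        {p | PermOn ((n+1)/2) p.1 ∧ p.2 ⊆ Finset.Icc 1 (n/2)} ∧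
      ∀ u v, IsWachs n u → IsWachs n v →
        (weakLE n u v ↔ (weakLE ((n+1)/2) (F u).1 (F v).1 ∧ (F u).2 ⊆ (F v).2))) ∧
    -- complemented lattice
    (∃ bot top : Equiv.Perm ℕ, IsWachs n bot ∧ IsWachs n top ∧
      (∀ w, IsWachs n w → weakLE n bot w ∧ weakLE n w top) ∧
      (∀ u v, IsWachs n u → IsWachs n v →
        (∃ s, IsWachs n s ∧ weakLE n u s ∧ weakLE n v s ∧
          ∀ z, IsWachs n z → weakLE n u z → weakLE n v z → weakLE n s z) ∧
        (∃ g, IsWachs n g ∧ weakLE n g u ∧ weakLE n g v ∧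
          ∀ z, IsWachs n z → weakLE n z u → weakLE n z v → weakLE n z g)) ∧
      (∀ u, IsWachs n u → ∃ c, IsWachs n c ∧
        (∀ z, IsWachs n z → weakLE n z u → weakLE n z c → z = bot) ∧
        (∀ z, IsWachs n z → weakLE n u z → weakLE n c z → z = top))) := by
  have hE2 : (2:ℕ) ∣ 2 := dvd_refl 2
  -- abbreviations
  have hordaux : ∀ u v : Equiv.Perm ℕ, IsWachs n u → IsWachs n v →
      (weakLE n u v ↔
        (weakLE ((n+1)/2) (FW n u).1 (FW n v).1 ∧ (FW n u).2 ⊆ (FW n v).2)) := by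
    intro u v hu hv
    rw [weakLE_iff hu.1 hv.1, weakLE_iff (FW_permOn hu hn) (FW_permOn hv hn),
      I_subset_char hu hv hn, FW_T hu hn, FW_T hv hn]
  have hIord : ∀ u v : Equiv.Perm ℕ, PermOn ((n+1)/2) u → PermOn ((n+1)/2) v →
      (weakLE ((n+1)/2) u v ↔ I ((n+1)/2) u ⊆ I ((n+1)/2) v) :=
    fun u v hu hv => weakLE_iff hu hv
  -- bijectivity package
  have hbij : Set.BijOn (FW n) {w | IsWachs n w}
      {p : Equiv.Perm ℕ × Finset ℕ |
        PermOn ((n+1)/2) p.1 ∧ p.2 ⊆ Finset.Icc 1 (n/2)} := by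
    refine ⟨?_, ?_, ?_⟩
    · intro w hw
      exact ⟨FW_permOn hw hn, by rw [FW_T hw hn]; exact FW_Tsub⟩
    · intro u hu v hv h
      exact FW_injOn hu hv hn h
    · intro q hq
      obtain ⟨v, hv, hFv⟩ := FW_surj hn hq.1 hq.2
      exact ⟨v, hv, by rw [hFv]⟩
  -- lattice structure data
  have hapt : TransOn (allPairs ((n+1)/2)) := by
    intro a b c h1 h2
    rw [mem_allPairs] at h1 h2 ⊢
    exact ⟨⟨h1.1.1, h2.1.2⟩, h1.2.trans h2.2⟩
  have hapc : CoTransOn ((n+1)/2) (allPairs ((n+1)/2)) := by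
    intro a b c h hab hbc hb
    rw [mem_allPairs] at h
    exact Or.inl (mem_allPairs.mpr ⟨⟨h.1.1, hb⟩, hab⟩)
  obtain ⟨tp0, htp0, hItp0⟩ :=
    exists_perm_of_set (subset_refl (allPairs ((n+1)/2))) hapt hapc
  obtain ⟨bot, hbot, hFbot⟩ := FW_surj hn (PermOn.one ((n+1)/2)) (Finset.empty_subset _)
  obtain ⟨top, htop, hFtop⟩ := FW_surj hn htp0 (subset_refl _)
  refine ⟨⟨FW n, hbij, hordaux⟩, bot, top, hbot, htop, ?_, ?_, ?_⟩
  · -- bot and top are global bounds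
    intro w hw
    have hpw := FW_permOn hw hn
    constructor
    · rw [hordaux bot w hbot hw]
      constructor
      · rw [hIord _ _ (FW_permOn hbot hn) hpw]
        intro x hx
        rw [hFbot] at hx
        rw [I_one] at hx
        exact absurd hx (Finset.notMem_empty x)
      · rw [hFbot]
        exact Finset.empty_subset _
    · rw [hordaux w top hw htop]
      constructor
      · rw [hIord _ _ hpw (FW_permOn htop hn), hFtop]
        intro x hx
        rw [hItp0]
        exact I_subset_allPairs hx
      · rw [hFtop, FW_T hw hn]
        exact FW_Tsub
  · -- joins and meets
    intro u v hu hv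
    have hpu := FW_permOn hu hn
    have hpv := FW_permOn hv hn
    have hsU : I ((n+1)/2) (FW n u).1 ⊆ allPairs ((n+1)/2) := I_subset_allPairs
    have hsV : I ((n+1)/2) (FW n v).1 ⊆ allPairs ((n+1)/2) := I_subset_allPairs
    have hTu : (FW n u).2 ⊆ Finset.Icc 1 (n/2) := by rw [FW_T hu hn]; exact FW_Tsub
    have hTv : (FW n v).2 ⊆ Finset.Icc 1 (n/2) := by rw [FW_T hv hn]; exact FW_Tsub
    constructor
    · -- join
      obtain ⟨jp, hjp, hIjp⟩ := exists_perm_of_set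
        (Finset.filter_subset _ _ : clos ((n+1)/2) (I ((n+1)/2) (FW n u).1)
          (I ((n+1)/2) (FW n v).1) ⊆ allPairs ((n+1)/2))
        (clos_trans hsU hsV) (clos_cotrans hsU hsV (I_cotrans _) (I_cotrans _))
      obtain ⟨s, hws, hFs⟩ := FW_surj hn hjp (Finset.union_subset hTu hTv)
      have hps := FW_permOn hws hn
      refine ⟨s, hws, ?_, ?_, ?_⟩
      · rw [hordaux u s hu hws]
        constructor
        · rw [hIord _ _ hpu hps, hFs]
          rw [hIjp]
          exact subset_clos_left hsU
        · rw [hFs]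
          exact Finset.subset_union_left
      · rw [hordaux v s hv hws]
        constructor
        · rw [hIord _ _ hpv hps, hFs, hIjp]
          exact subset_clos_right hsV
        · rw [hFs]
          exact Finset.subset_union_right
      · intro z hz h1 h2
        have hpz := FW_permOn hz hn
        obtain ⟨h1a, h1b⟩ := (hordaux u z hu hz).mp h1
        obtain ⟨h2a, h2b⟩ := (hordaux v z hv hz).mp h2
        rw [hIord _ _ hpu hpz] at h1a
        rw [hIord _ _ hpv hpz] at h2a
        rw [hordaux s z hws hz]
        constructor
        · rw [hIord _ _ hps hpz, hFs, hIjp]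
          exact clos_least h1a h2a (I_trans _)
        · rw [hFs]
          exact Finset.union_subset h1b h2b
    · -- meet
      have hCu_tr : TransOn (allPairs ((n+1)/2) \ I ((n+1)/2) (FW n u).1) :=
        compl_trans hsU (I_cotrans _)
      have hCv_tr : TransOn (allPairs ((n+1)/2) \ I ((n+1)/2) (FW n v).1) :=
        compl_trans hsV (I_cotrans _)
      have hCu_co : CoTransOn ((n+1)/2) (allPairs ((n+1)/2) \ I ((n+1)/2) (FW n u).1) :=
        compl_cotrans hsU (I_trans _)
      have hCv_co : CoTransOn ((n+1)/2) (allPairs ((n+1)/2) \ I ((n+1)/2) (FW n v).1) :=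
        compl_cotrans hsV (I_trans _)
      have hCu_sub : allPairs ((n+1)/2) \ I ((n+1)/2) (FW n u).1 ⊆ allPairs ((n+1)/2) :=
        Finset.sdiff_subset
      have hCv_sub : allPairs ((n+1)/2) \ I ((n+1)/2) (FW n v).1 ⊆ allPairs ((n+1)/2) :=
        Finset.sdiff_subset
      have hclsub : clos ((n+1)/2) (allPairs ((n+1)/2) \ I ((n+1)/2) (FW n u).1)
          (allPairs ((n+1)/2) \ I ((n+1)/2) (FW n v).1) ⊆ allPairs ((n+1)/2) :=
        Finset.filter_subset _ _
      obtain ⟨mp, hmp, hImp⟩ := exists_perm_of_set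
        (Finset.sdiff_subset :
          allPairs ((n+1)/2) \ clos ((n+1)/2)
            (allPairs ((n+1)/2) \ I ((n+1)/2) (FW n u).1)
            (allPairs ((n+1)/2) \ I ((n+1)/2) (FW n v).1) ⊆ allPairs ((n+1)/2))
        (compl_trans hclsub (clos_cotrans hCu_sub hCv_sub hCu_co hCv_co))
        (compl_cotrans hclsub (clos_trans hCu_sub hCv_sub))
      obtain ⟨g, hwg, hFg⟩ := FW_surj hn hmp
        ((Finset.inter_subset_left :
          (FW n u).2 ∩ (FW n v).2 ⊆ (FW n u).2).trans hTu)
      have hpg := FW_permOn hwg hn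
      refine ⟨g, hwg, ?_, ?_, ?_⟩
      · rw [hordaux g u hwg hu]
        constructor
        · rw [hIord _ _ hpg hpu, hFg, hImp]
          intro x hx
          rw [Finset.mem_sdiff] at hx
          by_contra hq
          exact hx.2 (subset_clos_left hCu_sub (Finset.mem_sdiff.mpr ⟨hx.1, hq⟩))
        · rw [hFg]
          exact Finset.inter_subset_left
      · rw [hordaux g v hwg hv]
        constructor
        · rw [hIord _ _ hpg hpv, hFg, hImp]
          intro x hx
          rw [Finset.mem_sdiff] at hx
          by_contra hq
          exact hx.2 (subset_clos_right hCv_sub (Finset.mem_sdiff.mpr ⟨hx.1, hq⟩))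
        · rw [hFg]
          exact Finset.inter_subset_right
      · intro z hz h1 h2
        have hpz := FW_permOn hz hn
        obtain ⟨h1a, h1b⟩ := (hordaux z u hz hu).mp h1
        obtain ⟨h2a, h2b⟩ := (hordaux z v hz hv).mp h2
        rw [hIord _ _ hpz hpu] at h1a
        rw [hIord _ _ hpz hpv] at h2a
        rw [hordaux z g hz hwg]
        have hCz_tr : TransOn (allPairs ((n+1)/2) \ I ((n+1)/2) (FW n z).1) :=
          compl_trans I_subset_allPairs (I_cotrans _)
        constructor
        · rw [hIord _ _ hpz hpg, hFg, hImp]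
          intro x hx
          rw [Finset.mem_sdiff]
          refine ⟨I_subset_allPairs hx, fun hc => ?_⟩
          have hcc : clos ((n+1)/2) (allPairs ((n+1)/2) \ I ((n+1)/2) (FW n u).1)
              (allPairs ((n+1)/2) \ I ((n+1)/2) (FW n v).1) ⊆
              allPairs ((n+1)/2) \ I ((n+1)/2) (FW n z).1 := by
            apply clos_least ?_ ?_ hCz_tr
            · intro y hy
              rw [Finset.mem_sdiff] at hy ⊢
              exact ⟨hy.1, fun hyz => hy.2 (h1a hyz)⟩
            · intro y hy
              rw [Finset.mem_sdiff] at hy ⊢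
              exact ⟨hy.1, fun hyz => hy.2 (h2a hyz)⟩
          exact (Finset.mem_sdiff.mp (hcc hc)).2 hx
        · rw [hFg]
          exact Finset.subset_inter h1b h2b
  · -- complements
    intro u hu
    have hpu := FW_permOn hu hn
    have hsU : I ((n+1)/2) (FW n u).1 ⊆ allPairs ((n+1)/2) := I_subset_allPairs
    obtain ⟨cp, hcp, hIcp⟩ := exists_perm_of_set
      (Finset.sdiff_subset : allPairs ((n+1)/2) \ I ((n+1)/2) (FW n u).1 ⊆ _)
      (compl_trans hsU (I_cotrans _)) (compl_cotrans hsU (I_trans _))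
    obtain ⟨c, hwc, hFc⟩ := FW_surj hn hcp (Finset.sdiff_subset)
    have hpc := FW_permOn hwc hn
    refine ⟨c, hwc, ?_, ?_⟩
    · intro z hz h1 h2
      have hpz := FW_permOn hz hn
      obtain ⟨h1a, h1b⟩ := (hordaux z u hz hu).mp h1
      obtain ⟨h2a, h2b⟩ := (hordaux z c hz hwc).mp h2
      rw [hIord _ _ hpz hpu] at h1a
      rw [hIord _ _ hpz hpc] at h2a
      rw [hFc] at h2a h2b
      rw [hIcp] at h2a
      have hIz : I ((n+1)/2) (FW n z).1 = ∅ := by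
        rw [Finset.eq_empty_iff_forall_notMem]
        intro x hx
        exact (Finset.mem_sdiff.mp (h2a hx)).2 (h1a hx)
      have hz1 : (FW n z).1 = 1 := I_inj hpz (PermOn.one _) (by rw [hIz, I_one])
      have hz2 : (FW n z).2 = ∅ := by
        rw [Finset.eq_empty_iff_forall_notMem]
        intro x hx
        exact (Finset.mem_sdiff.mp (h2b hx)).2 (h1b hx)
      apply FW_injOn hz hbot hn
      rw [hFbot]
      exact Prod.ext hz1 hz2
    · intro z hz h1 h2
      have hpz := FW_permOn hz hn
      obtain ⟨h1a, h1b⟩ := (hordaux u z hu hz).mp h1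
      obtain ⟨h2a, h2b⟩ := (hordaux c z hwc hz).mp h2
      rw [hIord _ _ hpu hpz] at h1a
      rw [hIord _ _ hpc hpz] at h2a
      rw [hFc] at h2a h2b
      rw [hIcp] at h2a
      have hIz : I ((n+1)/2) (FW n z).1 = allPairs ((n+1)/2) := by
        apply Finset.Subset.antisymm I_subset_allPairs
        intro x hx
        by_cases hq : x ∈ I ((n+1)/2) (FW n u).1
        · exact h1a hq
        · exact h2a (Finset.mem_sdiff.mpr ⟨hx, hq⟩)
      have hz1 : (FW n z).1 = tp0 := I_inj hpz htp0 (by rw [hIz, hItp0])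
      have hz2 : (FW n z).2 = Finset.Icc 1 (n/2) := by
        apply Finset.Subset.antisymm (by rw [FW_T hz hn]; exact FW_Tsub)
        intro x hx
        by_cases hq : x ∈ (FW n u).2
        · exact h1b hq
        · exact h2b (Finset.mem_sdiff.mpr ⟨hx, hq⟩)
      apply FW_injOn hz htop hn
      rw [hFtop]
      exact Prod.ext hz1 hz2

end WachsPaper
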